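/- arXiv:math/0106229 — 6 statements merged into one kernel-verified Lean document; each statement's English description precedes it below -/
import Mathlib

section
/- Let Δ be a complete simplicial multi-fan of dimension n with weight function w, and let v be a generic vector. For each maximal simplex I with |I|=n, writing v = Σ_{i∈I} a_i v_i uniquely, define μ(I) = #{i∈I : a_i > 0}, h_q(Δ) = Σ_{μ(I)=q} w(I), and e_q(Δ) = Σ_{K∈Σ^{(q)}} deg(Δ_K). Then Σ_{q=0}^n h_q(Δ)(s+1)^q = Σ_{m=0}^n e_{n-m}(Δ) s^m as polynomials in s. -/
open Finset

/-- The pairing between a covector and a vector in `ℝⁿ`. -/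
def dotp {n : ℕ} (x y : Fin n → ℝ) : ℝ := ∑ k, x k * y k

/-- A (simplicial) multi-fan of dimension `n` with rays indexed by `{1,…,d}`:
an augmented simplicial set `S`, ray vectors `v i` spanning the simplicial cones
`C(I) = pos span {v i : i ∈ I}`, and a weight `w` on simplices (the difference
`w = w⁺ − w⁻` of the two weight functions, restricted to top simplices is what matters). -/
structure MultiFan (n d : ℕ) where
  S : Finset (Finset (Fin d))
  empty_mem : ∅ ∈ S
  downClosed : ∀ I ∈ S, ∀ J ⊆ I, J ∈ S
  card_le : ∀ I ∈ S, I.card ≤ n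
  v : Fin d → (Fin n → ℝ)
  indep : ∀ I ∈ S, LinearIndependent ℝ (fun i : {x // x ∈ I} => v i.1)
  w : Finset (Fin d) → ℤ

namespace MultiFan

variable {n d : ℕ}

/-- `x` is generic for the projected multi-fan `Δ_K`: it avoids every linear subspace
spanned by a cone (containing `C(K)`) of dimension `< n`. -/
def GenericFor (Δ : MultiFan n d) (K : Finset (Fin d)) (x : Fin n → ℝ) : Prop :=
  ∀ L ∈ Δ.S, K ⊆ L → L.card < n → x ∉ Submodule.span ℝ (Δ.v '' (L : Set (Fin d)))

def Generic (Δ : MultiFan n d) (x : Fin n → ℝ) : Prop := Δ.GenericFor ∅ x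

/-- `x` lies (mod the span of `C(K)`) in the projected cone `C_K(I)`. -/
def InProjCone (Δ : MultiFan n d) (K I : Finset (Fin d)) (x : Fin n → ℝ) : Prop :=
  ∃ a : Fin d → ℝ, (∀ j ∈ I \ K, 0 ≤ a j) ∧
    (x - ∑ j ∈ I \ K, a j • Δ.v j) ∈ Submodule.span ℝ (Δ.v '' (K : Set (Fin d)))

open scoped Classical in
/-- `d_x` for the projected multi-fan `Δ_K`: the sum of the weights of top cones whose
projection contains the projection of `x`. -/
noncomputable def dv (Δ : MultiFan n d) (K : Finset (Fin d)) (x : Fin n → ℝ) : ℤ :=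
  ∑ I ∈ Δ.S.filter (fun I => I.card = n ∧ K ⊆ I ∧ Δ.InProjCone K I x), Δ.w I

/-- Pre-completeness of the projected multi-fan `Δ_K`. -/
def PreCompleteAt (Δ : MultiFan n d) (K : Finset (Fin d)) : Prop :=
  (∃ I ∈ Δ.S, K ⊆ I ∧ I.card = n) ∧
  ∀ x y : Fin n → ℝ, Δ.GenericFor K x → Δ.GenericFor K y → Δ.dv K x = Δ.dv K y

/-- Completeness: every projected multi-fan is pre-complete. -/
def Complete (Δ : MultiFan n d) : Prop := ∀ K ∈ Δ.S, Δ.PreCompleteAt K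

open scoped Classical in
/-- The Duistermaat–Heckman function of the simple multi-polytope `(Δ, {F_i})`, where
`F_i = {u : ⟨u, v i⟩ = c i}`, the data `uu I i = u_i^I` is the dual basis of `{v i : i ∈ I}`
and `ξ ∈ V` is a generic vector.  For `I ∈ Σ^{(n)}` the coefficient of `u − u_I` on `u_i^I`
is `⟨u, v i⟩ − c i`, so membership in the cone `C^*(I)^+` is expressed by the conditions below. -/
noncomputable def DH (Δ : MultiFan n d) (c : Fin d → ℝ)
    (uu : Finset (Fin d) → Fin d → (Fin n → ℝ)) (ξ : Fin n → ℝ) (u : Fin n → ℝ) : ℤ :=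
  ∑ I ∈ Δ.S.filter (fun I => I.card = n),
    if (∀ i ∈ I, (0 < dotp (uu I i) ξ ∧ c i ≤ dotp u (Δ.v i)) ∨
                 (dotp (uu I i) ξ < 0 ∧ dotp u (Δ.v i) ≤ c i))
    then (-1 : ℤ) ^ (I.filter fun i => 0 < dotp (uu I i) ξ).card * Δ.w I
    else 0

/-- `uu I i = u_i^I` is the basis dual to `{v i : i ∈ I}` for each top simplex `I`. -/
def DualBasis (Δ : MultiFan n d) (uu : Finset (Fin d) → Fin d → (Fin n → ℝ)) : Prop :=
  ∀ I ∈ Δ.S, I.card = n → ∀ i ∈ I, ∀ j ∈ I,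
    dotp (uu I i) (Δ.v j) = if i = j then 1 else 0

/-- Genericity of `ξ` needed for the DH function: `⟨u_i^I, ξ⟩ ≠ 0` for all `I, i`. -/
def GenericDual (Δ : MultiFan n d) (uu : Finset (Fin d) → Fin d → (Fin n → ℝ))
    (ξ : Fin n → ℝ) : Prop :=
  ∀ I ∈ Δ.S, I.card = n → ∀ i ∈ I, dotp (uu I i) ξ ≠ 0

variable {Δ : MultiFan n d}

lemma coeffs_eq {I : Finset (Fin d)} (hI : I ∈ Δ.S)
    {b c : Fin d → ℝ} (h : ∑ i ∈ I, b i • Δ.v i = ∑ i ∈ I, c i • Δ.v i) :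
    ∀ i ∈ I, b i = c i := by
  intro i hi
  have hli := Δ.indep I hI
  rw [linearIndependent_iff'] at hli
  have key := hli Finset.univ (fun j => b j.1 - c j.1) ?_ ⟨i, hi⟩ (Finset.mem_univ _)
  · have key' : b i - c i = 0 := key
    linarith
  · calc (∑ j : {x // x ∈ I}, (b j.1 - c j.1) • Δ.v j.1)
        = ∑ i ∈ I, (b i - c i) • Δ.v i :=
          Finset.sum_coe_sort I (fun i => (b i - c i) • Δ.v i)
      _ = 0 := by simp [sub_smul, Finset.sum_sub_distrib, h]

lemma exists_coeffs_of_mem_span {K : Finset (Fin d)} {y : Fin n → ℝ}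
    (hy : y ∈ Submodule.span ℝ (Δ.v '' (K : Set (Fin d)))) :
    ∃ c : Fin d → ℝ, y = ∑ i ∈ K, c i • Δ.v i := by
  obtain ⟨l, hl, rfl⟩ := (Finsupp.mem_span_image_iff_linearCombination ℝ).mp hy
  refine ⟨l, ?_⟩
  rw [Finsupp.linearCombination_apply, Finsupp.sum]
  refine Finset.sum_subset ?_ ?_
  · intro i hi
    exact Finset.mem_coe.mp ((Finsupp.mem_supported ℝ l).mp hl hi)
  · intro i _ hi
    simp [Finsupp.notMem_support_iff.mp hi]



lemma inProjCone_iff {x : Fin n → ℝ} (a : Finset (Fin d) → Fin d → ℝ)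
    (ha : ∀ I ∈ Δ.S, I.card = n → x = ∑ i ∈ I, a I i • Δ.v i)
    {K I : Finset (Fin d)} (hI : I ∈ Δ.S) (hIn : I.card = n) (hKI : K ⊆ I) :
    Δ.InProjCone K I x ↔ ∀ j ∈ I \ K, 0 ≤ a I j := by
  constructor
  · rintro ⟨b, hb, hmem⟩
    obtain ⟨c, hc⟩ := exists_coeffs_of_mem_span hmem
    set e : Fin d → ℝ := fun i => if i ∈ K then c i else b i with he
    have hxe : x = ∑ i ∈ I, e i • Δ.v i := by
      rw [← Finset.sum_sdiff hKI]
      have h1 : ∑ i ∈ I \ K, e i • Δ.v i = ∑ i ∈ I \ K, b i • Δ.v i := by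
        refine Finset.sum_congr rfl fun i hi => ?_
        rw [he]; simp [(Finset.mem_sdiff.mp hi).2]
      have h2 : ∑ i ∈ K, e i • Δ.v i = ∑ i ∈ K, c i • Δ.v i := by
        refine Finset.sum_congr rfl fun i hi => ?_
        rw [he]; simp [hi]
      rw [h1, h2, ← hc]; abel
    have hco := coeffs_eq hI ((ha I hI hIn).symm.trans hxe)
    intro j hj
    have hjK : j ∉ K := (Finset.mem_sdiff.mp hj).2
    have := hco j (Finset.mem_sdiff.mp hj).1
    rw [he] at this; simp only [hjK, if_neg, ite_false] at this
    rw [this]; exact hb j hj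
  · intro h
    refine ⟨a I, h, ?_⟩
    have heq : x - ∑ j ∈ I \ K, a I j • Δ.v j = ∑ i ∈ K, a I i • Δ.v i := by
      rw [ha I hI hIn, ← Finset.sum_sdiff hKI]; abel
    rw [heq]
    exact Submodule.sum_mem _ fun i hi => Submodule.smul_mem _ _
      (Submodule.subset_span ⟨i, by simpa using hi, rfl⟩)

lemma a_ne_zero {x : Fin n → ℝ} (hx : Δ.Generic x) (a : Finset (Fin d) → Fin d → ℝ)
    (ha : ∀ I ∈ Δ.S, I.card = n → x = ∑ i ∈ I, a I i • Δ.v i)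
    {I : Finset (Fin d)} (hI : I ∈ Δ.S) (hIn : I.card = n) :
    ∀ j ∈ I, a I j ≠ 0 := by
  intro j hj h0
  have hE : I.erase j ∈ Δ.S := Δ.downClosed I hI _ (Finset.erase_subset _ _)
  have hn1 : 0 < n := hIn ▸ Finset.card_pos.mpr ⟨j, hj⟩
  have hcard : (I.erase j).card < n := by
    rw [Finset.card_erase_of_mem hj, hIn]; omega
  refine hx _ hE (Finset.empty_subset _) hcard ?_
  have : x = ∑ i ∈ I.erase j, a I i • Δ.v i := by
    rw [ha I hI hIn, ← Finset.add_sum_erase I _ hj, h0]; simp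
  rw [this]
  exact Submodule.sum_mem _ fun i hi => Submodule.smul_mem _ _
    (Submodule.subset_span ⟨i, by simpa using And.intro (Finset.mem_of_mem_erase hi) (Finset.mem_erase.mp hi).1, rfl⟩)

lemma sandwich_card {I P : Finset (Fin d)} (hPI : P ⊆ I) {m : ℕ} (hm : m ≤ I.card) :
    ((I.powerset).filter (fun K => I \ P ⊆ K ∧ K.card = I.card - m)).card
      = P.card.choose m := by
  classical
  have hpn : P.card ≤ I.card := Finset.card_le_card hPI
  by_cases hmp : m ≤ P.card
  · rw [← Nat.choose_symm hmp, ← Finset.card_powersetCard (P.card - m) P]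
    apply Finset.card_bij' (fun K _ => K ∩ P) (fun T _ => T ∪ (I \ P))
    · intro K hK
      have h := Finset.mem_filter.mp hK
      have hKI := Finset.mem_powerset.mp h.1
      have hIPK := h.2.1
      have hKc := h.2.2
      rw [Finset.mem_powersetCard]
      refine ⟨Finset.inter_subset_right, ?_⟩
      have hKP : K \ P = I \ P := by
        apply Finset.Subset.antisymm
        · exact Finset.sdiff_subset_sdiff hKI Finset.Subset.rfl
        · intro y hy
          rw [Finset.mem_sdiff] at hy ⊢
          exact ⟨hIPK (Finset.mem_sdiff.mpr hy), hy.2⟩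
      have h1 := Finset.card_sdiff_add_card_inter K P
      rw [hKP, Finset.card_sdiff_of_subset hPI] at h1
      omega
    · intro T hT
      obtain ⟨hTP, hTc⟩ := Finset.mem_powersetCard.mp hT
      rw [Finset.mem_filter, Finset.mem_powerset]
      have hdisj : Disjoint T (I \ P) := by
        rw [Finset.disjoint_left]
        intro y hy hy'
        exact (Finset.mem_sdiff.mp hy').2 (hTP hy)
      refine ⟨Finset.union_subset (hTP.trans hPI) Finset.sdiff_subset,
        Finset.subset_union_right, ?_⟩
      rw [Finset.card_union_of_disjoint hdisj, hTc, Finset.card_sdiff_of_subset hPI]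
      omega
    · intro K hK
      have h := Finset.mem_filter.mp hK
      have hKI := Finset.mem_powerset.mp h.1
      have hIPK := h.2.1
      ext y
      simp only [Finset.mem_union, Finset.mem_inter, Finset.mem_sdiff]
      constructor
      · rintro (⟨h1, _⟩ | h1)
        · exact h1
        · exact hIPK (Finset.mem_sdiff.mpr h1)
      · intro hyK
        by_cases hyP : y ∈ P
        · exact Or.inl ⟨hyK, hyP⟩
        · exact Or.inr ⟨hKI hyK, hyP⟩
    · intro T hT
      have hTP := (Finset.mem_powersetCard.mp hT).1
      ext y
      simp only [Finset.mem_inter, Finset.mem_union, Finset.mem_sdiff]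
      constructor
      · rintro ⟨h1 | h1, h2⟩
        · exact h1
        · exact absurd h2 h1.2
      · intro hy
        exact ⟨Or.inl hy, hTP hy⟩
  · rw [Nat.choose_eq_zero_of_lt (lt_of_not_ge hmp), Finset.card_eq_zero,
      Finset.filter_eq_empty_iff]
    intro K hK
    rintro ⟨hsub, hcard⟩
    have h1 : (I \ P).card ≤ K.card := Finset.card_le_card hsub
    rw [Finset.card_sdiff_of_subset hPI] at h1
    omega



end MultiFan

/-- **Lemma 3.1** (h-vector / e-vector relation for complete simplicial multi-fans):
`∑_{q=0}^n h_q(Δ)(s+1)^q = ∑_{m=0}^n e_{n−m}(Δ) s^m`, where, for a fixed generic vector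
`x` with `x = ∑_{i∈I} a I i • v i` for each top simplex `I`, `μ(I) = #{i ∈ I : a I i > 0}`,
`h_q(Δ) = ∑_{μ(I)=q} w(I)` and `e_q(Δ) = ∑_{K∈Σ^{(q)}} deg(Δ_K)`. -/
theorem stmt0 (n d : ℕ) (Δ : MultiFan n d) (hC : Δ.Complete)
    (x : Fin n → ℝ) (hx : Δ.Generic x)
    (degK : Finset (Fin d) → ℤ)
    (hdeg : ∀ K ∈ Δ.S, ∀ y : Fin n → ℝ, Δ.GenericFor K y → Δ.dv K y = degK K)
    (a : Finset (Fin d) → Fin d → ℝ)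
    (ha : ∀ I ∈ Δ.S, I.card = n → x = ∑ i ∈ I, a I i • Δ.v i) :
    ∀ s : ℝ,
      ∑ q ∈ Finset.range (n+1),
        ((∑ I ∈ Δ.S.filter (fun I => I.card = n ∧
            (I.filter fun i => 0 < a I i).card = q), Δ.w I : ℤ) : ℝ) * (s+1)^q
      = ∑ m ∈ Finset.range (n+1),
        ((∑ K ∈ Δ.S.filter (fun K => K.card = n - m), degK K : ℤ) : ℝ) * s^m := by
  classical
  intro s
  have hgen : ∀ K, Δ.GenericFor K x := fun K L hL _ hcard => hx L hL (Finset.empty_subset L) hcard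
  have hμle : ∀ I ∈ Δ.S.filter (fun I => I.card = n),
      (I.filter fun i => 0 < a I i).card ∈ Finset.range (n+1) := by
    intro I hI
    rw [Finset.mem_range]
    have h1 := Finset.card_filter_le I (fun i => 0 < a I i)
    have h2 := (Finset.mem_filter.mp hI).2
    omega
  have hcond : ∀ I ∈ Δ.S, I.card = n → ∀ K, K ⊆ I →
      (Δ.InProjCone K I x ↔ I \ (I.filter fun i => 0 < a I i) ⊆ K) := by
    intro I hIS hIn K hKI
    rw [MultiFan.inProjCone_iff a ha hIS hIn hKI]
    constructor
    · intro h j hj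
      rw [Finset.mem_sdiff, Finset.mem_filter] at hj
      by_contra hjK
      have h1 := h j (Finset.mem_sdiff.mpr ⟨hj.1, hjK⟩)
      have hne := MultiFan.a_ne_zero hx a ha hIS hIn j hj.1
      exact hj.2 ⟨hj.1, lt_of_le_of_ne h1 (Ne.symm hne)⟩
    · intro h j hj
      rw [Finset.mem_sdiff] at hj
      by_contra hp
      push_neg at hp
      have hmem : j ∈ I \ (I.filter fun i => 0 < a I i) :=
        Finset.mem_sdiff.mpr ⟨hj.1, fun hc => absurd (Finset.mem_filter.mp hc).2 (by linarith)⟩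
      exact hj.2 (h hmem)
  have key : ∀ m ∈ Finset.range (n+1),
      (∑ K ∈ Δ.S.filter (fun K => K.card = n - m), degK K)
      = ∑ I ∈ Δ.S.filter (fun I => I.card = n), Δ.w I * (((I.filter fun i => 0 < a I i).card).choose m : ℤ) := by
    intro m hm
    rw [Finset.mem_range] at hm
    have step1 : ∀ K ∈ Δ.S.filter (fun K => K.card = n - m),
        degK K = ∑ I ∈ Δ.S.filter (fun I => I.card = n),
          (if K ⊆ I ∧ I \ (I.filter fun i => 0 < a I i) ⊆ K then Δ.w I else 0) := by
      intro K hK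
      have hKS := (Finset.mem_filter.mp hK).1
      rw [← hdeg K hKS x (hgen K), MultiFan.dv, ← Finset.sum_filter, Finset.filter_filter]
      apply Finset.sum_congr _ (fun _ _ => rfl)
      apply Finset.filter_congr
      intro I hIS
      constructor
      · rintro ⟨h1, h2, h3⟩
        exact ⟨h1, h2, (hcond I hIS h1 K h2).mp h3⟩
      · rintro ⟨h1, h2, h3⟩
        exact ⟨h1, h2, (hcond I hIS h1 K h2).mpr h3⟩
    rw [Finset.sum_congr rfl step1, Finset.sum_comm]
    apply Finset.sum_congr rfl
    intro I hI
    have hIS := (Finset.mem_filter.mp hI).1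
    have hIn := (Finset.mem_filter.mp hI).2
    rw [← Finset.sum_filter, Finset.sum_const, nsmul_eq_mul, mul_comm]
    congr 1
    have hPI : (I.filter fun i => 0 < a I i) ⊆ I := Finset.filter_subset _ _
    have hset : (Δ.S.filter (fun K => K.card = n - m)).filter
        (fun K => K ⊆ I ∧ I \ (I.filter fun i => 0 < a I i) ⊆ K)
        = (I.powerset).filter
          (fun K => I \ (I.filter fun i => 0 < a I i) ⊆ K ∧ K.card = I.card - m) := by
      ext K
      simp only [Finset.mem_filter, Finset.mem_powerset, hIn]
      constructor
      · rintro ⟨⟨_, h2⟩, h3, h4⟩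
        exact ⟨h3, h4, h2⟩
      · rintro ⟨h1, h2, h3⟩
        exact ⟨⟨Δ.downClosed I hIS K h1, h3⟩, h1, h2⟩
    rw [hset, MultiFan.sandwich_card hPI (by rw [hIn]; omega)]
  have binom : ∀ p ≤ n, ∑ m ∈ Finset.range (n+1), ((p.choose m : ℝ)) * s^m = (s+1)^p := by
    intro p hp
    have hsub : ∑ m ∈ Finset.range (n+1), ((p.choose m : ℝ)) * s^m
        = ∑ m ∈ Finset.range (p+1), ((p.choose m : ℝ)) * s^m := by
      rw [eq_comm]
      apply Finset.sum_subset (Finset.range_subset_range.mpr (by omega))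
      intro m _ hm'
      rw [Finset.mem_range, not_lt] at hm'
      rw [Nat.choose_eq_zero_of_lt (by omega)]
      simp
    rw [hsub, add_pow]
    simp only [one_pow, mul_one]
    apply Finset.sum_congr rfl
    intro k _
    ring
  have hLHS : ∑ q ∈ Finset.range (n+1),
        ((∑ I ∈ Δ.S.filter (fun I => I.card = n ∧
            (I.filter fun i => 0 < a I i).card = q), Δ.w I : ℤ) : ℝ) * (s+1)^q
      = ∑ I ∈ Δ.S.filter (fun I => I.card = n),
          (Δ.w I : ℝ) * (s+1) ^ (I.filter fun i => 0 < a I i).card := by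
    rw [← Finset.sum_fiberwise_of_maps_to (g := fun I => (I.filter fun i => 0 < a I i).card) hμle
      (fun I => (Δ.w I : ℝ) * (s+1) ^ (I.filter fun i => 0 < a I i).card)]
    apply Finset.sum_congr rfl
    intro q _
    have h1 : ∀ I ∈ (Δ.S.filter fun I => I.card = n).filter
        (fun I => (I.filter fun i => 0 < a I i).card = q),
        (Δ.w I : ℝ) * (s+1) ^ (I.filter fun i => 0 < a I i).card = (Δ.w I : ℝ) * (s+1)^q := by
      intro I hI
      rw [(Finset.mem_filter.mp hI).2]
    rw [Finset.sum_congr rfl h1, ← Finset.sum_mul, Finset.filter_filter]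
    push_cast
    ring
  have hRHS : ∑ m ∈ Finset.range (n+1),
        ((∑ K ∈ Δ.S.filter (fun K => K.card = n - m), degK K : ℤ) : ℝ) * s^m
      = ∑ I ∈ Δ.S.filter (fun I => I.card = n),
          (Δ.w I : ℝ) * (s+1) ^ (I.filter fun i => 0 < a I i).card := by
    have h1 : ∀ m ∈ Finset.range (n+1),
        ((∑ K ∈ Δ.S.filter (fun K => K.card = n - m), degK K : ℤ) : ℝ) * s^m
        = ∑ I ∈ Δ.S.filter (fun I => I.card = n),
            (Δ.w I : ℝ) * (((I.filter fun i => 0 < a I i).card).choose m : ℝ) * s^m := by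
      intro m hm
      rw [key m hm]
      push_cast
      rw [Finset.sum_mul]
    rw [Finset.sum_congr rfl h1, Finset.sum_comm]
    apply Finset.sum_congr rfl
    intro I hI
    have hIn := (Finset.mem_filter.mp hI).2
    have hμn : (I.filter fun i => 0 < a I i).card ≤ n :=
      le_trans (Finset.card_filter_le _ _) (le_of_eq hIn)
    rw [← binom _ hμn, Finset.mul_sum]
    apply Finset.sum_congr rfl
    intro m _
    ring
  exact hLHS.trans hRHS.symm
end

section
/- For a complete simplicial multi-fan Δ of dimension n, the h-numbers satisfy the symmetry h_q(Δ) = h_{n−q}(Δ) for all 0 ≤ q ≤ n. -/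
open Finset

/-! Completeness of the projected fan `Δ_K`, evaluated at the generic vectors `x` and `-x`,
says that the top simplices `I ⊇ K` whose negative coordinates (those of `x` in the basis
`v_I`) lie in `K` carry the same total weight as those whose positive coordinates lie in `K`.
Summing over all faces `K` with `n - t` elements counts each `I` with multiplicity
`C(μ(I), t)`, resp. `C(n - μ(I), t)`; hence `∑_q C(q, t) h_q = ∑_q C(q, t) h_{n-q}` for all
`t ≤ n`, and since the matrix `(C(q, t))` is unitriangular, `h_q = h_{n-q}`. -/

theorem eq_of_forall_sum_choose_smul_eq {M : Type*} [AddCommGroup M] {n : ℕ} {F G : ℕ → M}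
    (h : ∀ t ≤ n, ∑ r ∈ range (n + 1), r.choose t • F r = ∑ r ∈ range (n + 1), r.choose t • G r) :
    ∀ t ≤ n, F t = G t := by
  have hsub : ∀ t ≤ n, ∑ r ∈ range (n + 1), r.choose t • (F r - G r) = 0 := fun t ht => by
    simp only [smul_sub, sum_sub_distrib, h t ht, sub_self]
  intro t ht
  obtain ⟨k, hk⟩ : ∃ k, n - t = k := ⟨_, rfl⟩
  induction k using Nat.strong_induction_on generalizing t with
  | _ k ih =>
    have := hsub t ht
    rw [sum_eq_single t] at this
    · simpa [sub_eq_zero] using this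
    · intro r hr hrt
      rcases lt_or_gt_of_ne hrt with hlt | hgt
      · simp [Nat.choose_eq_zero_of_lt hlt]
      · have hrn := mem_range.mp hr
        rw [ih (n - r) (by omega) r (by omega) rfl, sub_self, smul_zero]
    · simp only [mem_range]; omega

theorem card_filter_powersetCard_superset {α : Type*} [DecidableEq α] {N I : Finset α}
    (hN : N ⊆ I) {m : ℕ} (hm : m ≤ #I) :
    #{K ∈ I.powersetCard m | N ⊆ K} = (#I - #N).choose (#I - m) := by
  have hNI := card_le_card hN
  by_cases hNm : #N ≤ m
  · rw [card_filter_powersetCard_subset N I m hN hNm]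
    exact Nat.choose_symm_of_eq_add (by omega)
  · rw [Nat.choose_eq_zero_of_lt (by omega), card_eq_zero, filter_eq_empty_iff]
    exact fun K hK hNK => hNm ((card_le_card hNK).trans (mem_powersetCard.mp hK).2.le)

section

variable {α M : Type*} [DecidableEq α] {n : ℕ} {T : Finset (Finset α)}

theorem sum_biUnion_powersetCard_sum_filter_subset [AddCommMonoid M] (hT : ∀ I ∈ T, #I = n)
    {N : Finset α → Finset α} (hN : ∀ I ∈ T, N I ⊆ I) (w : Finset α → M) {m : ℕ} (hm : m ≤ n) :
    ∑ K ∈ T.biUnion (powersetCard m), ∑ I ∈ T with K ⊆ I ∧ N I ⊆ K, w I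
      = ∑ I ∈ T, (n - #(N I)).choose (n - m) • w I := by
  rw [sum_comm' (t' := T) (s' := fun I => {K ∈ I.powersetCard m | N I ⊆ K})]
  · refine sum_congr rfl fun I hI => ?_
    rw [sum_const, card_filter_powersetCard_superset (hN I hI) (hT I hI ▸ hm), hT I hI]
  · intro K I
    simp only [mem_biUnion, mem_filter, mem_powersetCard]
    constructor
    · rintro ⟨⟨J, -, -, hKm⟩, hI, hKI, hNK⟩
      exact ⟨⟨⟨hKI, hKm⟩, hNK⟩, hI⟩
    · rintro ⟨⟨⟨hKI, hKm⟩, hNK⟩, hI⟩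
      exact ⟨⟨I, hI, hKI, hKm⟩, hI, hKI, hNK⟩

theorem sum_filter_card_eq_sum_filter_card_sub [AddCommGroup M] (hT : ∀ I ∈ T, #I = n)
    {P : Finset α → Finset α} (hP : ∀ I ∈ T, P I ⊆ I) (w : Finset α → M)
    (h : ∀ I ∈ T, ∀ K ⊆ I,
      ∑ J ∈ T with K ⊆ J ∧ J \ P J ⊆ K, w J = ∑ J ∈ T with K ⊆ J ∧ P J ⊆ K, w J)
    {q : ℕ} (hq : q ≤ n) :
    ∑ I ∈ T with #(P I) = q, w I = ∑ I ∈ T with #(P I) = n - q, w I := by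
  have hchoose : ∀ t ≤ n,
      ∑ I ∈ T, (#(P I)).choose t • w I = ∑ I ∈ T, (n - #(P I)).choose t • w I := by
    intro t ht
    have hsum : ∑ K ∈ T.biUnion (powersetCard (n - t)), ∑ J ∈ T with K ⊆ J ∧ J \ P J ⊆ K, w J
        = ∑ K ∈ T.biUnion (powersetCard (n - t)), ∑ J ∈ T with K ⊆ J ∧ P J ⊆ K, w J :=
      sum_congr rfl fun K hK => by
        obtain ⟨I, hI, hKI⟩ := mem_biUnion.mp hK
        exact h I hI K (mem_powersetCard.mp hKI).1
    rw [sum_biUnion_powersetCard_sum_filter_subset hT (fun I _ => sdiff_subset) w (by omega),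
      sum_biUnion_powersetCard_sum_filter_subset hT hP w (by omega), Nat.sub_sub_self ht] at hsum
    refine (sum_congr rfl fun I hI => ?_).trans hsum
    rw [card_sdiff_of_subset (hP I hI), hT I hI,
      Nat.sub_sub_self (hT I hI ▸ card_le_card (hP I hI))]
  have hfiber : ∀ f : ℕ → ℕ, ∑ I ∈ T, f (#(P I)) • w I
      = ∑ r ∈ range (n + 1), f r • ∑ I ∈ T with #(P I) = r, w I := by
    intro f
    rw [← sum_fiberwise_of_maps_to (g := fun I => #(P I)) (t := range (n + 1))
      fun I hI => mem_range.mpr (Nat.lt_succ_of_le (hT I hI ▸ card_le_card (hP I hI)))]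
    refine sum_congr rfl fun r _ => ?_
    rw [smul_sum]
    exact sum_congr rfl fun I hI => by rw [(mem_filter.mp hI).2]
  refine eq_of_forall_sum_choose_smul_eq (F := fun r => ∑ I ∈ T with #(P I) = r, w I)
    (G := fun r => ∑ I ∈ T with #(P I) = n - r, w I) (fun t ht => ?_) q hq
  rw [← hfiber, hchoose t ht, hfiber fun r => (n - r).choose t, ← sum_range_reflect]
  refine sum_congr rfl fun r hr => ?_
  rw [Nat.add_sub_cancel, Nat.sub_sub_self (Nat.lt_succ_iff.mp (mem_range.mp hr))]

end

namespace MultiFan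

variable {n d : ℕ}

theorem Generic.genericFor {Δ : MultiFan n d} {x : Fin n → ℝ} (hx : Δ.Generic x)
    (K : Finset (Fin d)) : Δ.GenericFor K x :=
  fun L hL _ hLn => hx L hL (empty_subset L) hLn

theorem GenericFor.neg {Δ : MultiFan n d} {K : Finset (Fin d)} {x : Fin n → ℝ}
    (hx : Δ.GenericFor K x) : Δ.GenericFor K (-x) :=
  fun L hL hKL hLn => by simpa only [Submodule.neg_mem_iff] using hx L hL hKL hLn

theorem Complete.dv_neg {Δ : MultiFan n d} (hC : Δ.Complete) {x : Fin n → ℝ}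
    (hx : Δ.Generic x) {K : Finset (Fin d)} (hK : K ∈ Δ.S) : Δ.dv K (-x) = Δ.dv K x :=
  (hC K hK).2 _ _ (hx.genericFor K).neg (hx.genericFor K)

theorem Generic.coeff_ne_zero {Δ : MultiFan n d} {x : Fin n → ℝ} (hx : Δ.Generic x)
    {I : Finset (Fin d)} (hI : I ∈ Δ.S) (hIn : #I = n) {b : Fin d → ℝ}
    (hb : x = ∑ i ∈ I, b i • Δ.v i) {i : Fin d} (hi : i ∈ I) : b i ≠ 0 := by
  intro hbi
  have hcard : #(I.erase i) < n := by
    rw [card_erase_of_mem hi]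
    have := card_pos.mpr ⟨i, hi⟩
    omega
  refine hx _ (Δ.downClosed I hI _ (erase_subset i I)) (empty_subset _) hcard ?_
  rw [Submodule.mem_span_image_finset_iff_exists_fun']
  exact ⟨b, by rw [hb, ← add_sum_erase I _ hi, hbi, zero_smul, zero_add]⟩

theorem inProjCone_iff_s2 (Δ : MultiFan n d) {I K : Finset (Fin d)} (hI : I ∈ Δ.S) (hK : K ⊆ I)
    {x : Fin n → ℝ} {b : Fin d → ℝ} (hb : x = ∑ i ∈ I, b i • Δ.v i) :
    Δ.InProjCone K I x ↔ {i ∈ I | b i < 0} ⊆ K := by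
  simp only [InProjCone, Submodule.mem_span_image_finset_iff_exists_fun']
  constructor
  · rintro ⟨a, ha, c, hc⟩
    have hx : x = ∑ i ∈ I, K.piecewise c a i • Δ.v i := by
      have hout : ∑ i ∈ I \ K, K.piecewise c a i • Δ.v i = ∑ i ∈ I \ K, a i • Δ.v i :=
        sum_congr rfl fun i hi => by rw [piecewise_eq_of_notMem _ _ _ (mem_sdiff.mp hi).2]
      have hin : ∑ i ∈ K, K.piecewise c a i • Δ.v i = ∑ i ∈ K, c i • Δ.v i :=
        sum_congr rfl fun i hi => by rw [piecewise_eq_of_mem _ _ _ hi]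
      rw [← sum_sdiff hK, hout, hin, hc, add_sub_cancel]
    have hcoeff := linearIndepOn_finset_iffₛ.mp (Δ.indep I hI) _ _ (hb.symm.trans hx)
    intro j hj
    obtain ⟨hjI, hneg⟩ := mem_filter.mp hj
    by_contra hjK
    rw [hcoeff j hjI, piecewise_eq_of_notMem _ _ _ hjK] at hneg
    exact (ha j (mem_sdiff.mpr ⟨hjI, hjK⟩)).not_gt hneg
  · intro hneg
    refine ⟨b, fun j hj => ?_, b, ?_⟩
    · obtain ⟨hjI, hjK⟩ := mem_sdiff.mp hj
      exact not_lt.mp fun hlt => hjK (hneg (mem_filter.mpr ⟨hjI, hlt⟩))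
    · rw [hb, ← sum_sdiff hK, add_sub_cancel_left]

theorem dv_eq_sum (Δ : MultiFan n d) (K : Finset (Fin d)) {x : Fin n → ℝ}
    {b : Finset (Fin d) → Fin d → ℝ}
    (hb : ∀ I ∈ Δ.S, #I = n → x = ∑ i ∈ I, b I i • Δ.v i) :
    Δ.dv K x = ∑ I ∈ Δ.S with #I = n ∧ K ⊆ I ∧ {i ∈ I | b I i < 0} ⊆ K, Δ.w I := by
  classical
  unfold dv
  refine sum_congr (filter_congr fun I hI => ?_) fun _ _ => rfl
  refine and_congr_right fun hIn => and_congr_right fun hKI => ?_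
  exact Δ.inProjCone_iff_s2 hI hKI (hb I hI hIn)

end MultiFan

/-- Symmetry of the h-numbers of a complete simplicial multi-fan: `h_q(Δ) = h_{n−q}(Δ)`. -/
theorem stmt2 (n d : ℕ) (Δ : MultiFan n d) (hC : Δ.Complete)
    (x : Fin n → ℝ) (hx : Δ.Generic x)
    (a : Finset (Fin d) → Fin d → ℝ)
    (ha : ∀ I ∈ Δ.S, I.card = n → x = ∑ i ∈ I, a I i • Δ.v i) :
    ∀ q : ℕ, q ≤ n →
      ∑ I ∈ Δ.S.filter (fun I => I.card = n ∧
          (I.filter fun i => 0 < a I i).card = q), Δ.w I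
    = ∑ I ∈ Δ.S.filter (fun I => I.card = n ∧
          (I.filter fun i => 0 < a I i).card = n - q), Δ.w I := by
  intro q hq
  have hneg : ∀ I ∈ Δ.S, #I = n → {i ∈ I | a I i < 0} = I \ {i ∈ I | 0 < a I i} := by
    intro I hI hIn
    rw [← filter_not]
    refine filter_congr fun i hi => ?_
    rw [not_lt, (hx.coeff_ne_zero hI hIn (ha I hI hIn) hi).le_iff_lt]
  have hax : ∀ I ∈ Δ.S, #I = n → -x = ∑ i ∈ I, (-a I i) • Δ.v i := fun I hI hIn => by
    simp only [ha I hI hIn, neg_smul, sum_neg_distrib]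
  have hfaces : ∀ I ∈ Δ.S.filter (#· = n), ∀ K ⊆ I,
      ∑ J ∈ Δ.S.filter (#· = n) with K ⊆ J ∧ J \ {i ∈ J | 0 < a J i} ⊆ K, Δ.w J
        = ∑ J ∈ Δ.S.filter (#· = n) with K ⊆ J ∧ {i ∈ J | 0 < a J i} ⊆ K, Δ.w J := by
    intro I hI K hKI
    have hdv := (hC.dv_neg hx (Δ.downClosed I (mem_filter.mp hI).1 K hKI)).symm
    rw [Δ.dv_eq_sum K ha, Δ.dv_eq_sum K hax] at hdv
    simp only [neg_lt_zero] at hdv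
    rw [filter_filter, filter_filter, ← hdv]
    refine sum_congr (filter_congr fun J hJ => and_congr_right fun hJn => ?_) fun _ _ => rfl
    rw [hneg J hJ hJn]
  simpa only [filter_filter] using
    sum_filter_card_eq_sum_filter_card_sub (fun I hI => (mem_filter.mp hI).2)
      (fun _ _ => filter_subset _ _) Δ.w hfaces hq
end

section
/- For a complete simplicial multi-fan Δ of dimension n, the T_y-genus T_y[Δ] := Σ_{q=0}^n h_q(Δ)(−y)^q satisfies T_y[Δ] = Σ_{m=0}^n e_{n−m}(Δ)(−1−y)^m, where e_q(Δ) = Σ_{K∈Σ^{(q)}} deg(Δ_K). -/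
open Finset

open Finset
section Aux
variable {n d : ℕ}

open scoped Classical

lemma aux_coeff_zero (Δ : MultiFan n d) {I : Finset (Fin d)} (hI : I ∈ Δ.S)
    {g : Fin d → ℝ} (hg : ∑ i ∈ I, g i • Δ.v i = 0) : ∀ i ∈ I, g i = 0 := by
  have h := (linearIndependent_iff'.mp (Δ.indep I hI)) Finset.univ (fun i => g i.1)
  have hsum : ∑ i : {x // x ∈ I}, g i.1 • Δ.v i.1 = 0 := by
    rw [Finset.sum_coe_sort I (fun i => g i • Δ.v i)]; exact hg
  intro i hi
  exact h hsum ⟨i, hi⟩ (Finset.mem_univ _)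

lemma aux_mem_span_iff (Δ : MultiFan n d) (K : Finset (Fin d)) (z : Fin n → ℝ) :
    z ∈ Submodule.span ℝ (Δ.v '' (K : Set (Fin d))) ↔
      ∃ c : Fin d → ℝ, z = ∑ i ∈ K, c i • Δ.v i := by
  constructor
  · intro hz
    rw [Set.image_eq_range, Submodule.mem_span_range_iff_exists_fun] at hz
    obtain ⟨c, hc⟩ := hz
    refine ⟨fun i => if h : i ∈ K then c ⟨i, Finset.mem_coe.mpr h⟩ else 0, ?_⟩
    rw [← hc, ← Finset.sum_finset_coe
      (fun i => (if h : i ∈ K then c ⟨i, Finset.mem_coe.mpr h⟩ else 0) • Δ.v i) K]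
    refine Finset.sum_congr rfl (fun i _ => ?_)
    simp only [dif_pos (Finset.mem_coe.mp i.2)]
  · rintro ⟨c, rfl⟩
    exact Submodule.sum_smul_mem _ _ (fun i hi => Submodule.subset_span ⟨i, hi, rfl⟩)

lemma aux_a_ne_zero (Δ : MultiFan n d) (x : Fin n → ℝ) (hx : Δ.Generic x)
    (a : Finset (Fin d) → Fin d → ℝ)
    (ha : ∀ I ∈ Δ.S, I.card = n → x = ∑ i ∈ I, a I i • Δ.v i)
    {I : Finset (Fin d)} (hI : I ∈ Δ.S) (hIc : I.card = n) {j : Fin d} (hj : j ∈ I) :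
    a I j ≠ 0 := by
  intro h0
  have hL : I.erase j ∈ Δ.S := Δ.downClosed I hI _ (Finset.erase_subset _ _)
  have hcard : (I.erase j).card < n := by
    rw [Finset.card_erase_of_mem hj, hIc]
    have : 1 ≤ n := hIc ▸ Finset.card_pos.mpr ⟨j, hj⟩
    omega
  refine hx _ hL (Finset.empty_subset _) hcard ?_
  have : x = ∑ i ∈ I.erase j, a I i • Δ.v i := by
    rw [Finset.sum_erase _ (by rw [h0, zero_smul])]; exact ha I hI hIc
  rw [this]
  exact Submodule.sum_smul_mem _ _ (fun i hi => Submodule.subset_span ⟨i, hi, rfl⟩)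

lemma aux_inproj_iff (Δ : MultiFan n d) (x : Fin n → ℝ) (hx : Δ.Generic x)
    (a : Finset (Fin d) → Fin d → ℝ)
    (ha : ∀ I ∈ Δ.S, I.card = n → x = ∑ i ∈ I, a I i • Δ.v i)
    {I K : Finset (Fin d)} (hI : I ∈ Δ.S) (hIc : I.card = n) (hKI : K ⊆ I) :
    Δ.InProjCone K I x ↔ ∀ j ∈ I \ K, 0 < a I j := by
  constructor
  · rintro ⟨b, hb0, hbmem⟩
    rw [aux_mem_span_iff] at hbmem
    obtain ⟨c, hc⟩ := hbmem
    set g : Fin d → ℝ := fun i => a I i - (if i ∈ K then c i else b i) with hg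
    have hgz : ∑ i ∈ I, g i • Δ.v i = 0 := by
      have hsplit : ∑ i ∈ I, (if i ∈ K then c i else b i) • Δ.v i
          = ∑ i ∈ I \ K, b i • Δ.v i + ∑ i ∈ K, c i • Δ.v i := by
        rw [← Finset.sum_sdiff hKI]
        congr 1
        · exact Finset.sum_congr rfl (fun i hi => by
            rw [if_neg (Finset.mem_sdiff.mp hi).2])
        · exact Finset.sum_congr rfl (fun i hi => by rw [if_pos hi])
      have hxI := ha I hI hIc
      simp only [hg, sub_smul, Finset.sum_sub_distrib]
      rw [hsplit, ← hxI, ← hc]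
      abel
    intro j hj
    have hgj := aux_coeff_zero Δ hI hgz j (Finset.mem_sdiff.mp hj).1
    have hjK : j ∉ K := (Finset.mem_sdiff.mp hj).2
    rw [hg] at hgj
    simp only [if_neg hjK] at hgj
    have : a I j = b j := by linarith
    have hne := aux_a_ne_zero Δ x hx a ha hI hIc (Finset.mem_sdiff.mp hj).1
    have := hb0 j hj
    rcases lt_or_eq_of_le (by linarith : (0:ℝ) ≤ a I j) with h | h
    · exact h
    · exact absurd h.symm hne
  · intro hpos
    refine ⟨a I, fun j hj => (hpos j hj).le, ?_⟩
    have hsd : ∑ i ∈ I \ K, a I i • Δ.v i + ∑ i ∈ K, a I i • Δ.v i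
        = ∑ i ∈ I, a I i • Δ.v i := Finset.sum_sdiff hKI
    have : x - ∑ j ∈ I \ K, a I j • Δ.v j = ∑ i ∈ K, a I i • Δ.v i := by
      rw [ha I hI hIc, ← hsd]; abel
    rw [this]
    exact Submodule.sum_smul_mem _ _ (fun i hi => Submodule.subset_span ⟨i, hi, rfl⟩)

end Aux

lemma aux_count (Δ : MultiFan n d) {I : Finset (Fin d)} (hI : I ∈ Δ.S) (hIc : I.card = n)
    (P : Finset (Fin d)) (hP : P ⊆ I) (z : ℝ) :
    ∑ K ∈ Δ.S, (if (K ⊆ I ∧ I \ P ⊆ K) then z ^ (n - K.card) else 0)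
      = (1 + z) ^ P.card := by
  have hpow : I.powerset ⊆ Δ.S := fun K hK => Δ.downClosed I hI K (Finset.mem_powerset.mp hK)
  rw [← Finset.sum_subset hpow (fun K _ hK => by
    rw [if_neg]; intro ⟨h1, _⟩; exact hK (Finset.mem_powerset.mpr h1))]
  have h1 : ∑ K ∈ I.powerset, (if (K ⊆ I ∧ I \ P ⊆ K) then z ^ (n - K.card) else 0)
      = ∑ K ∈ I.powerset.filter (fun K => I \ P ⊆ K), z ^ (n - K.card) := by
    rw [Finset.sum_filter]
    refine Finset.sum_congr rfl (fun K hK => ?_)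
    exact if_congr (and_iff_right (Finset.mem_powerset.mp hK)) rfl rfl
  rw [h1]
  have h2 : ∑ K ∈ I.powerset.filter (fun K => I \ P ⊆ K), z ^ (n - K.card)
      = ∑ T ∈ P.powerset, z ^ ((P \ T).card) := by
    refine Finset.sum_bij' (fun K _ => K ∩ P) (fun T _ => (I \ P) ∪ T) ?_ ?_ ?_ ?_ ?_
    · intro K _
      exact Finset.mem_powerset.mpr Finset.inter_subset_right
    · intro T hT
      rw [Finset.mem_filter, Finset.mem_powerset]
      exact ⟨Finset.union_subset Finset.sdiff_subset
        ((Finset.mem_powerset.mp hT).trans hP), Finset.subset_union_left⟩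
    · intro K hK
      rw [Finset.mem_filter, Finset.mem_powerset] at hK
      obtain ⟨hKI, hD⟩ := hK
      ext t
      simp only [Finset.mem_union, Finset.mem_inter, Finset.mem_sdiff]
      constructor
      · rintro (⟨ht, hnp⟩ | ⟨ht, _⟩)
        · exact hD (Finset.mem_sdiff.mpr ⟨ht, hnp⟩)
        · exact ht
      · intro ht
        by_cases hp : t ∈ P
        · exact Or.inr ⟨ht, hp⟩
        · exact Or.inl ⟨hKI ht, hp⟩
    · intro T hT
      have hTP := Finset.mem_powerset.mp hT
      ext t
      simp only [Finset.mem_inter, Finset.mem_union, Finset.mem_sdiff]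
      constructor
      · rintro ⟨h | h, hp⟩
        · exact absurd hp h.2
        · exact h
      · intro ht
        exact ⟨Or.inr ht, hTP ht⟩
    · intro K hK
      rw [Finset.mem_filter, Finset.mem_powerset] at hK
      obtain ⟨hKI, hD⟩ := hK
      show z ^ (n - K.card) = z ^ ((P \ (K ∩ P)).card)
      congr 1
      have e1 : (K ∩ P).card + (K \ P).card = K.card := Finset.card_inter_add_card_sdiff K P
      have e2 : K \ P = I \ P := by
        apply Finset.Subset.antisymm (Finset.sdiff_subset_sdiff hKI (le_refl _))
        intro t ht
        rw [Finset.mem_sdiff] at ht ⊢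
        exact ⟨hD (Finset.mem_sdiff.mpr ht), ht.2⟩
      have e3 : (I \ P).card = n - P.card := by rw [Finset.card_sdiff_of_subset hP, hIc]
      have e4 : (P \ (K ∩ P)).card = P.card - (K ∩ P).card :=
        Finset.card_sdiff_of_subset Finset.inter_subset_right
      have e5 : (K ∩ P).card ≤ P.card := Finset.card_le_card Finset.inter_subset_right
      have e6 : P.card ≤ n := hIc ▸ Finset.card_le_card hP
      have e7 : K.card ≤ n := hIc ▸ Finset.card_le_card hKI
      rw [e2] at e1
      omega
  rw [h2]
  have h3 := Finset.prod_add (fun _ : Fin d => (1:ℝ)) (fun _ => z) P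
  simp only [Finset.prod_const, one_pow, one_mul] at h3
  exact h3.symm

open scoped Classical

/-- **Corollary 3.3**: the `T_y`-genus `T_y[Δ] = ∑_q h_q(Δ)(−y)^q` of a complete simplicial
multi-fan equals `∑_{m=0}^n e_{n−m}(Δ)(−1−y)^m`, where `e_q(Δ) = ∑_{K∈Σ^{(q)}} deg(Δ_K)`. -/
theorem stmt3 (n d : ℕ) (Δ : MultiFan n d) (hC : Δ.Complete)
    (x : Fin n → ℝ) (hx : Δ.Generic x)
    (degK : Finset (Fin d) → ℤ)
    (hdeg : ∀ K ∈ Δ.S, ∀ z : Fin n → ℝ, Δ.GenericFor K z → Δ.dv K z = degK K)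
    (a : Finset (Fin d) → Fin d → ℝ)
    (ha : ∀ I ∈ Δ.S, I.card = n → x = ∑ i ∈ I, a I i • Δ.v i) :
    ∀ y : ℝ,
      ∑ q ∈ Finset.range (n+1),
        ((∑ I ∈ Δ.S.filter (fun I => I.card = n ∧
            (I.filter fun i => 0 < a I i).card = q), Δ.w I : ℤ) : ℝ) * (-y)^q
      = ∑ m ∈ Finset.range (n+1),
        ((∑ K ∈ Δ.S.filter (fun K => K.card = n - m), degK K : ℤ) : ℝ) * (-1-y)^m := by
  intro y
  set P : Finset (Fin d) → Finset (Fin d) := fun I => I.filter (fun i => 0 < a I i) with hPdef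
  -- the common value
  set T : ℝ := ∑ I ∈ Δ.S, (if I.card = n then (Δ.w I : ℝ) * (-y) ^ (P I).card else 0) with hT
  have hLHS : ∑ q ∈ Finset.range (n+1),
      ((∑ I ∈ Δ.S.filter (fun I => I.card = n ∧ (P I).card = q), Δ.w I : ℤ) : ℝ) * (-y)^q
      = T := by
    have step : ∀ q, ((∑ I ∈ Δ.S.filter (fun I => I.card = n ∧ (P I).card = q),
        Δ.w I : ℤ) : ℝ) * (-y)^q
        = ∑ I ∈ Δ.S, (if (I.card = n ∧ (P I).card = q) then (Δ.w I : ℝ) * (-y)^q else 0) := by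
      intro q
      rw [Finset.sum_filter]
      push_cast
      rw [Finset.sum_mul]
      exact Finset.sum_congr rfl (fun I _ => by split <;> simp)
    simp only [step]
    rw [Finset.sum_comm, hT]
    refine Finset.sum_congr rfl (fun I hI => ?_)
    by_cases hc : I.card = n
    · rw [if_pos hc]
      have hmem : (P I).card ∈ Finset.range (n+1) := by
        rw [Finset.mem_range]
        have h1 : (P I).card ≤ I.card := Finset.card_filter_le _ _
        omega
      rw [show (∑ q ∈ Finset.range (n+1),
          if (I.card = n ∧ (P I).card = q) then (Δ.w I : ℝ) * (-y)^q else 0)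
        = ∑ q ∈ Finset.range (n+1),
          if q = (P I).card then (Δ.w I : ℝ) * (-y)^q else 0 from
        Finset.sum_congr rfl (fun q _ => if_congr (by constructor <;> (intro h; simp_all)) rfl rfl)]
      rw [Finset.sum_ite_eq' (Finset.range (n+1)) ((P I).card)
        (fun q => (Δ.w I : ℝ) * (-y)^q), if_pos hmem]
    · rw [if_neg hc]
      exact Finset.sum_eq_zero (fun q _ => by rw [if_neg (fun h => hc h.1)])
  have hgen : ∀ K, Δ.GenericFor K x := fun K L hL _ hcard => hx L hL (Finset.empty_subset L) hcard
  -- degK as a combinatorial sum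
  have hKd : ∀ K ∈ Δ.S, (degK K : ℝ)
      = ∑ I ∈ Δ.S, (if (I.card = n ∧ K ⊆ I ∧ I \ P I ⊆ K) then (Δ.w I : ℝ) else 0) := by
    intro K hK
    rw [← hdeg K hK x (hgen K)]
    unfold MultiFan.dv
    push_cast
    rw [Finset.sum_filter]
    refine Finset.sum_congr rfl (fun I hI => ?_)
    refine if_congr (and_congr_right fun hc => and_congr_right fun hKI => ?_) rfl rfl
    rw [aux_inproj_iff Δ x hx a ha hI hc hKI]
    constructor
    · intro hpos i hi
      rw [Finset.mem_sdiff, hPdef, Finset.mem_filter] at hi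
      by_contra hiK
      exact hi.2 ⟨hi.1, hpos i (Finset.mem_sdiff.mpr ⟨hi.1, hiK⟩)⟩
    · intro hD j hj
      rw [Finset.mem_sdiff] at hj
      by_contra hnot
      exact hj.2 (hD (Finset.mem_sdiff.mpr ⟨hj.1, fun hp =>
        hnot (Finset.mem_filter.mp hp).2⟩))
  have hRHS : ∑ m ∈ Finset.range (n+1),
      ((∑ K ∈ Δ.S.filter (fun K => K.card = n - m), degK K : ℤ) : ℝ) * (-1-y)^m = T := by
    set z : ℝ := -1 - y with hz
    have step : ∀ m, ((∑ K ∈ Δ.S.filter (fun K => K.card = n - m), degK K : ℤ) : ℝ) * z^m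
        = ∑ K ∈ Δ.S, ∑ I ∈ Δ.S,
            (if (K.card = n - m ∧ I.card = n ∧ K ⊆ I ∧ I \ P I ⊆ K)
              then (Δ.w I : ℝ) * z^m else 0) := by
      intro m
      rw [Finset.sum_filter]
      push_cast
      rw [Finset.sum_mul]
      refine Finset.sum_congr rfl (fun K hK => ?_)
      by_cases hc : K.card = n - m
      · rw [if_pos hc, hKd K hK, Finset.sum_mul]
        refine Finset.sum_congr rfl (fun I _ => ?_)
        by_cases hc2 : I.card = n ∧ K ⊆ I ∧ I \ P I ⊆ K
        · rw [if_pos hc2, if_pos ⟨hc, hc2⟩]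
        · rw [if_neg hc2, if_neg (fun h => hc2 h.2), zero_mul]
      · rw [if_neg hc, zero_mul]
        exact (Finset.sum_eq_zero (fun I _ => by rw [if_neg (fun h => hc h.1)])).symm
    simp only [step]
    rw [Finset.sum_comm]
    -- now sum over K outside, m middle, I inner;  reorder to I outside
    have swap2 : ∀ K ∈ Δ.S, ∑ m ∈ Finset.range (n+1), ∑ I ∈ Δ.S,
        (if (K.card = n - m ∧ I.card = n ∧ K ⊆ I ∧ I \ P I ⊆ K)
          then (Δ.w I : ℝ) * z^m else 0)
        = ∑ I ∈ Δ.S, (if (I.card = n ∧ K ⊆ I ∧ I \ P I ⊆ K)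
            then (Δ.w I : ℝ) * z^(n - K.card) else 0) := by
      intro K _
      rw [Finset.sum_comm]
      refine Finset.sum_congr rfl (fun I _ => ?_)
      by_cases hc : I.card = n ∧ K ⊆ I ∧ I \ P I ⊆ K
      · have hKn : K.card ≤ n := hc.1 ▸ Finset.card_le_card hc.2.1
        rw [if_pos hc]
        rw [show (∑ m ∈ Finset.range (n+1),
            if (K.card = n - m ∧ I.card = n ∧ K ⊆ I ∧ I \ P I ⊆ K)
              then (Δ.w I : ℝ) * z^m else 0)
          = ∑ m ∈ Finset.range (n+1), if m = n - K.card then (Δ.w I : ℝ) * z^m else 0 from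
          Finset.sum_congr rfl (fun m hm => if_congr
            ⟨fun h => by have := Finset.mem_range.mp hm; omega,
             fun h => ⟨by omega, hc⟩⟩ rfl rfl)]
        rw [Finset.sum_ite_eq' (Finset.range (n+1)) (n - K.card)
          (fun m => (Δ.w I : ℝ) * z^m), if_pos (Finset.mem_range.mpr (by omega))]
      · rw [if_neg hc]
        exact Finset.sum_eq_zero (fun m _ => by rw [if_neg (fun h => hc h.2)])
    rw [Finset.sum_congr rfl swap2, Finset.sum_comm, hT]
    refine Finset.sum_congr rfl (fun I hI => ?_)
    by_cases hc : I.card = n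
    · rw [if_pos hc]
      have key := aux_count Δ hI hc (P I) (Finset.filter_subset _ _) z
      calc ∑ K ∈ Δ.S, (if (I.card = n ∧ K ⊆ I ∧ I \ P I ⊆ K)
              then (Δ.w I : ℝ) * z^(n - K.card) else 0)
          = (Δ.w I : ℝ) * ∑ K ∈ Δ.S, (if (K ⊆ I ∧ I \ P I ⊆ K) then z^(n - K.card) else 0) := by
            rw [Finset.mul_sum]
            refine Finset.sum_congr rfl (fun K _ => ?_)
            by_cases h2 : K ⊆ I ∧ I \ P I ⊆ K
            · rw [if_pos ⟨hc, h2⟩, if_pos h2]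
            · rw [if_neg (fun h => h2 h.2), if_neg h2, mul_zero]
        _ = (Δ.w I : ℝ) * (1 + z) ^ (P I).card := by rw [key]
        _ = (Δ.w I : ℝ) * (-y) ^ (P I).card := by rw [show (1:ℝ) + z = -y by rw [hz]; ring]
    · rw [if_neg hc]
      exact Finset.sum_eq_zero (fun K _ => by rw [if_neg (fun h => hc h.1)])
  exact hLHS.trans hRHS.symm
end

section
/- (Wall crossing formula) Let P = (Δ, F) be a simple multi-polytope of dimension n, F one of the hyperplanes F_i, and let u_α, u_β ∈ V* \ ∪F_i be such that the segment from u_α to u_β crosses F transversely at μ and meets no other hyperplane of the arrangement. Then DH_P(u_α) − DH_P(u_β) = Σ_{i: F_i = F} sign⟨u_β − u_α, v_i⟩ · DH_{P_i}(μ − f_i), where P_i is the projected multi-polytope on the hyperplane (V*)_i = {u : ⟨u, v_i⟩ = 0} obtained by translating F_i by a chosen point −f_i ∈ −F_i. -/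
open Finset

open scoped Classical in
/-- The Duistermaat–Heckman function of the projected multi-polytope `P_i` evaluated at
`μ − f_i` (for `μ ∈ F_i`): since the dual basis of the projected rays `{v̄_j : j ∈ I∖{i}}`
is `{u_j^I : j ∈ I∖{i}}` and the coefficient of `(μ − f_i) − (u_I − f_i)` on `u_j^I` is
`⟨μ, v_j⟩ − c_j`, the value `DH_{P_i}(μ − f_i)` is given by the following expression,
independent of the chosen `f_i ∈ F_i`. -/
noncomputable def MultiFan.DHproj {n d : ℕ} (Δ : MultiFan n d) (c : Fin d → ℝ)
    (uu : Finset (Fin d) → Fin d → (Fin n → ℝ)) (ξ : Fin n → ℝ) (i : Fin d)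
    (μ : Fin n → ℝ) : ℤ :=
  ∑ I ∈ Δ.S.filter (fun I => I.card = n ∧ i ∈ I),
    if (∀ j ∈ I.erase i, (0 < dotp (uu I j) ξ ∧ c j ≤ dotp μ (Δ.v j)) ∨
                 (dotp (uu I j) ξ < 0 ∧ dotp μ (Δ.v j) ≤ c j))
    then (-1 : ℤ) ^ ((I.erase i).filter fun j => 0 < dotp (uu I j) ξ).card * Δ.w I
    else 0

/-!
Expand `DH_P` as a sum over the top cones `I` of `(-1)^I w(I) φ_I`. Along the segment only the
wall inequality changes sign, and a top cone `I` has at most one facet on the wall, because the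
dual basis `u^I` separates the hyperplanes `F_i`, `i ∈ I`. If `I` has no facet on the wall its term
is the same at `u_α` and `u_β`. If `F_i` is the wall, `φ_I` factors as the indicator of the `i`-th
half-space times `φ_{I∖{i}}`; crossing the wall this indicator, weighted by the sign `±1` that
`(u_i^I)^+` contributes to `(-1)^I`, jumps by `sign⟨u_β - u_α, v_i⟩` whatever the sign of
`⟨u_i^I, ξ⟩`, and what remains is the term of `I` in `DH_{P_i}(μ - f_i)`.
-/

namespace MultiFan

variable {n d : ℕ}

lemma dotp_eq_dotProduct (x y : Fin n → ℝ) : dotp x y = x ⬝ᵥ y := rfl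

lemma dotp_segment (u u' v : Fin n → ℝ) (t : ℝ) :
    dotp (u + t • (u' - u)) v = dotp u v + t * dotp (u' - u) v := by
  simp only [dotp_eq_dotProduct, add_dotProduct, smul_dotProduct, smul_eq_mul]

def InSignedRay (a c x : ℝ) : Prop := (0 < a ∧ c ≤ x) ∨ (a < 0 ∧ x ≤ c)

lemma inSignedRay_congr {a c x y : ℝ} (hx : x ≠ c) (hy : y ≠ c) (h : c < x ↔ c < y) :
    InSignedRay a c x ↔ InSignedRay a c y := by
  simp only [InSignedRay, hx.symm.le_iff_lt, hy.symm.le_iff_lt, ← not_lt, h]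

open scoped Classical in
noncomputable def signedRayIndicator (a c x : ℝ) : ℤ :=
  if InSignedRay a c x then (if 0 < a then -1 else 1) else 0

lemma signedRayIndicator_sub_of_lt_of_lt {a c x y : ℝ} (ha : a ≠ 0) (hx : x < c) (hy : c < y) :
    signedRayIndicator a c x - signedRayIndicator a c y = 1 := by
  rcases ha.lt_or_gt with ha | ha <;>
    simp [signedRayIndicator, InSignedRay, ha, ha.not_gt, hx.le, hy.le, hx.not_ge, hy.not_ge]

lemma pos_iff_pos_of_forall_ne_zero {f : ℝ → ℝ} {a b s t : ℝ} (hf : ContinuousOn f (Set.Icc a b))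
    (hne : ∀ r ∈ Set.Icc a b, f r ≠ 0) (hs : s ∈ Set.Icc a b) (ht : t ∈ Set.Icc a b) :
    0 < f s ↔ 0 < f t := by
  suffices key : ∀ s ∈ Set.Icc a b, ∀ t ∈ Set.Icc a b, 0 < f s → 0 < f t from
    ⟨key s hs t ht, key t ht s hs⟩
  intro s hs t ht hfs
  by_contra! hft
  obtain ⟨r, hr, hfr⟩ := isPreconnected_Icc.intermediate_value ht hs hf ⟨hft, hfs.le⟩
  exact hne r hr hfr

variable (Δ : MultiFan n d) (c : Fin d → ℝ) (uu : Finset (Fin d) → Fin d → (Fin n → ℝ))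
  (ξ : Fin n → ℝ)

def hyperplane (j : Fin d) : Set (Fin n → ℝ) := {x | dotp x (Δ.v j) = c j}

/-- `u ∈ C*(I)^+` as far as the facets `j ∈ K` are concerned: the coefficient `⟨u, v j⟩ - c j`
of `u - u_I` on `u_j^I` has the sign of `⟨u_j^I, ξ⟩`, or vanishes. -/
def InPolarizedCone (I K : Finset (Fin d)) (u : Fin n → ℝ) : Prop :=
  ∀ j ∈ K, InSignedRay (dotp (uu I j) ξ) (c j) (dotp u (Δ.v j))

open scoped Classical in
/-- For `K = I` this is the term `(-1)^I w(I) φ_I(u)` of `DH_P`; for `K = I.erase i` it is the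
term of `DH_{P_i}` coming from the projected cone of `I`. -/
noncomputable def coneTerm (I K : Finset (Fin d)) (u : Fin n → ℝ) : ℤ :=
  if Δ.InPolarizedCone c uu ξ I K u then
    (-1) ^ (K.filter fun j => 0 < dotp (uu I j) ξ).card * Δ.w I
  else 0

open scoped Classical in
lemma DH_eq_sum_coneTerm (u : Fin n → ℝ) :
    Δ.DH c uu ξ u = ∑ I ∈ Δ.S.filter (fun I => I.card = n), Δ.coneTerm c uu ξ I I u :=
  sum_congr rfl fun _ _ => if_congr Iff.rfl rfl rfl

open scoped Classical in
lemma DHproj_eq_sum_coneTerm (i : Fin d) (μ : Fin n → ℝ) :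
    Δ.DHproj c uu ξ i μ =
      ∑ I ∈ Δ.S.filter (fun I => I.card = n ∧ i ∈ I), Δ.coneTerm c uu ξ I (I.erase i) μ :=
  sum_congr rfl fun _ _ => if_congr Iff.rfl rfl rfl

variable {Δ c uu ξ}

lemma coneTerm_insert {I K : Finset (Fin d)} {i : Fin d} (hi : i ∉ K) (u : Fin n → ℝ) :
    Δ.coneTerm c uu ξ I (insert i K) u =
      signedRayIndicator (dotp (uu I i) ξ) (c i) (dotp u (Δ.v i)) * Δ.coneTerm c uu ξ I K u := by
  have hcone : Δ.InPolarizedCone c uu ξ I (insert i K) u ↔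
      InSignedRay (dotp (uu I i) ξ) (c i) (dotp u (Δ.v i)) ∧ Δ.InPolarizedCone c uu ξ I K u :=
    forall_mem_insert _ _ _
  have hcard : i ∉ K.filter fun j => 0 < dotp (uu I j) ξ := fun h => hi (mem_filter.1 h).1
  simp only [coneTerm, signedRayIndicator, hcone, filter_insert]
  split_ifs <;> simp_all [card_insert_of_notMem hcard, pow_succ]

lemma coneTerm_segment_eq {I K : Finset (Fin d)} {uα uβ : Fin n → ℝ}
    (hK : ∀ j ∈ K, ∀ t ∈ Set.Icc (0 : ℝ) 1, dotp (uα + t • (uβ - uα)) (Δ.v j) ≠ c j)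
    {t : ℝ} (ht : t ∈ Set.Icc (0 : ℝ) 1) :
    Δ.coneTerm c uu ξ I K (uα + t • (uβ - uα)) = Δ.coneTerm c uu ξ I K uα := by
  have h0 : (0 : ℝ) ∈ Set.Icc (0 : ℝ) 1 := ⟨le_rfl, zero_le_one⟩
  have hside : ∀ j ∈ K, c j < dotp (uα + t • (uβ - uα)) (Δ.v j) ↔ c j < dotp uα (Δ.v j) := by
    intro j hj
    have hcont : ContinuousOn (fun r : ℝ => dotp (uα + r • (uβ - uα)) (Δ.v j) - c j)
        (Set.Icc 0 1) := by
      simp only [dotp_segment]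
      fun_prop
    simpa [sub_pos] using pos_iff_pos_of_forall_ne_zero hcont
      (fun r hr => sub_ne_zero.2 (hK j hj r hr)) ht h0
  have hcone : Δ.InPolarizedCone c uu ξ I K (uα + t • (uβ - uα)) ↔
      Δ.InPolarizedCone c uu ξ I K uα :=
    forall₂_congr fun j hj =>
      inSignedRay_congr (hK j hj t ht) (by simpa using hK j hj 0 h0) (hside j hj)
  classical
  exact if_congr hcone rfl rfl

lemma coneTerm_insert_sub_coneTerm_insert {I K : Finset (Fin d)} {i : Fin d} (hi : i ∉ K)
    (hξi : dotp (uu I i) ξ ≠ 0) {uα uβ : Fin n → ℝ} {t₀ : ℝ} (ht₀ : t₀ ∈ Set.Ioo (0 : ℝ) 1)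
    (hK : ∀ j ∈ K, ∀ t ∈ Set.Icc (0 : ℝ) 1, dotp (uα + t • (uβ - uα)) (Δ.v j) ≠ c j)
    (hwall : dotp (uα + t₀ • (uβ - uα)) (Δ.v i) = c i) (hαi : dotp uα (Δ.v i) ≠ c i) :
    Δ.coneTerm c uu ξ I (insert i K) uα - Δ.coneTerm c uu ξ I (insert i K) uβ =
      (if 0 < dotp (uβ - uα) (Δ.v i) then 1 else -1) *
        Δ.coneTerm c uu ξ I K (uα + t₀ • (uβ - uα)) := by
  have hKβ : Δ.coneTerm c uu ξ I K uβ = Δ.coneTerm c uu ξ I K uα := by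
    simpa using coneTerm_segment_eq hK (t := 1) ⟨zero_le_one, le_rfl⟩
  rw [coneTerm_insert hi, coneTerm_insert hi, hKβ,
    coneTerm_segment_eq hK (Set.Ioo_subset_Icc_self ht₀), ← sub_mul]
  congr 1
  set s := dotp (uβ - uα) (Δ.v i)
  have hxα : dotp uα (Δ.v i) - c i = -(t₀ * s) := by rw [dotp_segment] at hwall; linarith
  have hxβ : dotp uβ (Δ.v i) - c i = (1 - t₀) * s := by
    have : dotp uβ (Δ.v i) = dotp uα (Δ.v i) + s := by
      simp only [s, dotp_eq_dotProduct, sub_dotProduct, add_sub_cancel]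
    linarith
  have hs : s ≠ 0 := fun hs => hαi (by simpa [hs, sub_eq_zero] using hxα)
  have ht₀' : 0 < 1 - t₀ := sub_pos.2 ht₀.2
  rcases hs.lt_or_gt with hs | hs
  · rw [if_neg hs.not_gt, ← neg_sub, signedRayIndicator_sub_of_lt_of_lt hξi
      (by linarith [mul_neg_of_pos_of_neg ht₀' hs])
      (by linarith [mul_neg_of_pos_of_neg ht₀.1 hs])]
  · rw [if_pos hs, signedRayIndicator_sub_of_lt_of_lt hξi
      (by linarith [mul_pos ht₀.1 hs]) (by linarith [mul_pos ht₀' hs])]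

lemma hyperplane_ne_of_ne (huu : Δ.DualBasis uu) {I : Finset (Fin d)} (hI : I ∈ Δ.S)
    (hcard : I.card = n) {i j : Fin d} (hi : i ∈ I) (hj : j ∈ I) (hne : i ≠ j) :
    Δ.hyperplane c i ≠ Δ.hyperplane c j := by
  intro h
  have hmem : ∀ x, dotp x (Δ.v i) = c i → dotp x (Δ.v j) = c j := fun x hx =>
    (Set.ext_iff.1 h x).1 hx
  have hii := huu I hI hcard i hi i hi
  have hij := huu I hI hcard i hi j hj
  have hjj := huu I hI hcard j hj j hj
  have hji := huu I hI hcard j hj i hi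
  simp only [if_true, hne, hne.symm, if_false, dotp_eq_dotProduct] at hii hij hjj hji
  -- `c i • u_i^I` and `c i • u_i^I + u_j^I` both lie on `F_i`, but not both on `F_j`
  have h₁ := hmem (c i • uu I i)
  have h₂ := hmem (c i • uu I i + uu I j)
  simp only [dotp_eq_dotProduct, add_dotProduct, smul_dotProduct, smul_eq_mul, hii, hij, hjj,
    hji] at h₁ h₂
  norm_num at h₁ h₂
  linarith

open scoped Classical in
lemma coneTerm_sub_coneTerm_eq_sum_walls (huu : Δ.DualBasis uu) (hξ : Δ.GenericDual uu ξ)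
    {I : Finset (Fin d)} (hI : I ∈ Δ.S) (hcard : I.card = n) {i₀ : Fin d} {uα uβ : Fin n → ℝ}
    {t₀ : ℝ} (ht₀ : t₀ ∈ Set.Ioo (0 : ℝ) 1)
    (hwall : dotp (uα + t₀ • (uβ - uα)) (Δ.v i₀) = c i₀)
    (hα : ∀ j ∈ I, dotp uα (Δ.v j) ≠ c j)
    (hother : ∀ j ∈ I, Δ.hyperplane c j ≠ Δ.hyperplane c i₀ →
      ∀ t ∈ Set.Icc (0 : ℝ) 1, dotp (uα + t • (uβ - uα)) (Δ.v j) ≠ c j) :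
    Δ.coneTerm c uu ξ I I uα - Δ.coneTerm c uu ξ I I uβ =
      ∑ i ∈ I.filter (fun i => Δ.hyperplane c i = Δ.hyperplane c i₀),
        (if 0 < dotp (uβ - uα) (Δ.v i) then 1 else -1) *
          Δ.coneTerm c uu ξ I (I.erase i) (uα + t₀ • (uβ - uα)) := by
  by_cases hW : ∃ i ∈ I, Δ.hyperplane c i = Δ.hyperplane c i₀
  · obtain ⟨i, hi, hiW⟩ := hW
    have hwalls : I.filter (fun j => Δ.hyperplane c j = Δ.hyperplane c i₀) = {i} := by
      refine eq_singleton_iff_unique_mem.2 ⟨mem_filter.2 ⟨hi, hiW⟩, fun j hj => ?_⟩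
      obtain ⟨hjI, hjW⟩ := mem_filter.1 hj
      by_contra hji
      exact hyperplane_ne_of_ne huu hI hcard hjI hi hji (hjW.trans hiW.symm)
    have hK : ∀ j ∈ I.erase i, ∀ t ∈ Set.Icc (0 : ℝ) 1,
        dotp (uα + t • (uβ - uα)) (Δ.v j) ≠ c j := by
      intro j hj
      refine hother j (mem_of_mem_erase hj) fun hjW => ne_of_mem_erase hj ?_
      have hjwall : j ∈ I.filter (fun j => Δ.hyperplane c j = Δ.hyperplane c i₀) :=
        mem_filter.2 ⟨mem_of_mem_erase hj, hjW⟩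
      simpa [hwalls] using hjwall
    have hwall_i : uα + t₀ • (uβ - uα) ∈ Δ.hyperplane c i := hiW ▸ hwall
    rw [hwalls, sum_singleton, ← coneTerm_insert_sub_coneTerm_insert (notMem_erase i I)
      (hξ I hI hcard i hi) ht₀ hK hwall_i (hα i hi), insert_erase hi]
  · push Not at hW
    rw [filter_false_of_mem hW, sum_empty, sub_eq_zero]
    simpa using (coneTerm_segment_eq (fun j hj => hother j hj (hW j hj)) (t := 1)
      ⟨zero_le_one, le_rfl⟩).symm

end MultiFan

open scoped Classical in
theorem stmt5_general (n d : ℕ) (Δ : MultiFan n d)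
    (c : Fin d → ℝ) (uu : Finset (Fin d) → Fin d → (Fin n → ℝ))
    (huu : Δ.DualBasis uu) (ξ : Fin n → ℝ) (hξ : Δ.GenericDual uu ξ)
    (i₀ : Fin d)
    (uα uβ μ : Fin n → ℝ) (t₀ : ℝ) (ht0 : 0 < t₀) (ht1 : t₀ < 1)
    (hμ : μ = uα + t₀ • (uβ - uα))
    (hwall : dotp μ (Δ.v i₀) = c i₀)
    (hα : ∀ j : Fin d, {j} ∈ Δ.S → dotp uα (Δ.v j) ≠ c j)
    (hother : ∀ j : Fin d, {j} ∈ Δ.S →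
      {x : Fin n → ℝ | dotp x (Δ.v j) = c j} ≠ {x : Fin n → ℝ | dotp x (Δ.v i₀) = c i₀} →
      ∀ t : ℝ, 0 ≤ t → t ≤ 1 → dotp (uα + t • (uβ - uα)) (Δ.v j) ≠ c j) :
    Δ.DH c uu ξ uα - Δ.DH c uu ξ uβ
      = ∑ i ∈ Finset.univ.filter (fun i : Fin d => {i} ∈ Δ.S ∧
          {x : Fin n → ℝ | dotp x (Δ.v i) = c i}
            = {x : Fin n → ℝ | dotp x (Δ.v i₀) = c i₀}),
          (if 0 < dotp (uβ - uα) (Δ.v i) then 1 else -1 : ℤ) * Δ.DHproj c uu ξ i μ := by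
  subst hμ
  have hvertex : ∀ I ∈ Δ.S, ∀ j ∈ I, {j} ∈ Δ.S := fun I hI j hj =>
    Δ.downClosed I hI {j} (singleton_subset_iff.2 hj)
  simp_rw [MultiFan.DH_eq_sum_coneTerm, MultiFan.DHproj_eq_sum_coneTerm, mul_sum,
    ← sum_sub_distrib]
  rw [sum_comm' (t' := Δ.S.filter (fun I => I.card = n))
    (s' := fun I => I.filter fun i => Δ.hyperplane c i = Δ.hyperplane c i₀)]
  · refine sum_congr rfl fun I hI => ?_
    obtain ⟨hIS, hcard⟩ := mem_filter.1 hI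
    exact MultiFan.coneTerm_sub_coneTerm_eq_sum_walls huu hξ hIS hcard ⟨ht0, ht1⟩ hwall
      (fun j hj => hα j (hvertex I hIS j hj))
      (fun j hj hne t ht => hother j (hvertex I hIS j hj) hne t ht.1 ht.2)
  · intro i I
    simp only [mem_filter, mem_univ, true_and]
    constructor
    · rintro ⟨⟨-, hW⟩, hIS, hcard, hi⟩
      exact ⟨⟨hi, hW⟩, hIS, hcard⟩
    · rintro ⟨⟨hi, hW⟩, hIS, hcard⟩
      exact ⟨⟨hvertex I hIS i hi, hW⟩, hIS, hcard, hi⟩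

open scoped Classical in
/-- **Lemma 5.3** (Wall crossing formula).  If the segment from `u_α` to `u_β` crosses the
wall `F = F_{i₀}` transversely at `μ` and meets no other hyperplane of the arrangement, then
`DH_P(u_α) − DH_P(u_β) = ∑_{i : F_i = F} sign⟨u_β − u_α, v_i⟩ · DH_{P_i}(μ − f_i)`. -/
theorem stmt5 (n d : ℕ) (Δ : MultiFan n d) (hC : Δ.Complete)
    (c : Fin d → ℝ) (uu : Finset (Fin d) → Fin d → (Fin n → ℝ))
    (huu : Δ.DualBasis uu) (ξ : Fin n → ℝ) (hξ : Δ.GenericDual uu ξ)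
    (i₀ : Fin d) (h₀ : {i₀} ∈ Δ.S)
    (uα uβ μ : Fin n → ℝ) (t₀ : ℝ) (ht0 : 0 < t₀) (ht1 : t₀ < 1)
    (hμ : μ = uα + t₀ • (uβ - uα))
    (hwall : dotp μ (Δ.v i₀) = c i₀)
    (htrans : dotp (uβ - uα) (Δ.v i₀) ≠ 0)
    (hα : ∀ j : Fin d, {j} ∈ Δ.S → dotp uα (Δ.v j) ≠ c j)
    (hβ : ∀ j : Fin d, {j} ∈ Δ.S → dotp uβ (Δ.v j) ≠ c j)
    (hother : ∀ j : Fin d, {j} ∈ Δ.S →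
      {x : Fin n → ℝ | dotp x (Δ.v j) = c j} ≠ {x : Fin n → ℝ | dotp x (Δ.v i₀) = c i₀} →
      ∀ t : ℝ, 0 ≤ t → t ≤ 1 → dotp (uα + t • (uβ - uα)) (Δ.v j) ≠ c j) :
    Δ.DH c uu ξ uα - Δ.DH c uu ξ uβ
      = ∑ i ∈ Finset.univ.filter (fun i : Fin d => {i} ∈ Δ.S ∧
          {x : Fin n → ℝ | dotp x (Δ.v i) = c i}
            = {x : Fin n → ℝ | dotp x (Δ.v i₀) = c i₀}),
          (if 0 < dotp (uβ - uα) (Δ.v i) then 1 else -1 : ℤ) * Δ.DHproj c uu ξ i μ :=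
  stmt5_general n d Δ c uu huu ξ hξ i₀ uα uβ μ t₀ ht0 ht1 hμ hwall hα hother
end

section
/- Let P = (Δ, F) be a simple multi-polytope of dimension n. Then the support of the Duistermaat–Heckman function DH_P is bounded, and DH_P (as a function on V* \ ∪F_i) is independent of the choice of generic vector v ∈ V used in its definition. -/
open Finset

section Aux

variable {n d : ℕ}

/-- `dotp a` as a linear map in the second variable. -/
def dotpL {m : ℕ} (a : Fin m → ℝ) : (Fin m → ℝ) →ₗ[ℝ] ℝ where
  toFun x := dotp a x
  map_add' x y := by
    simp only [dotp, Pi.add_apply, mul_add, Finset.sum_add_distrib]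
  map_smul' r x := by
    simp only [dotp, Pi.smul_apply, smul_eq_mul, RingHom.id_apply, Finset.mul_sum]
    exact Finset.sum_congr rfl fun k _ => by ring

lemma dotp_eq_dotpL {m : ℕ} (a x : Fin m → ℝ) : dotp a x = dotpL a x := rfl

lemma dotp_sum {m : ℕ} (a : Fin m → ℝ) {α : Type*} (s : Finset α) (f : α → (Fin m → ℝ)) :
    dotp a (∑ j ∈ s, f j) = ∑ j ∈ s, dotp a (f j) := by
  simp only [dotp_eq_dotpL, map_sum]

lemma dotp_smul {m : ℕ} (a : Fin m → ℝ) (r : ℝ) (x : Fin m → ℝ) :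
    dotp a (r • x) = r * dotp a x := by
  simp only [dotp_eq_dotpL, map_smul, smul_eq_mul]

lemma dotp_sub {m : ℕ} (a x y : Fin m → ℝ) : dotp a (x - y) = dotp a x - dotp a y := by
  simp only [dotp_eq_dotpL, map_sub]

lemma abs_dotp_le {m : ℕ} (x y : Fin m → ℝ) :
    |dotp x y| ≤ (∑ k, |x k|) * (∑ k, |y k|) := by
  calc |dotp x y| ≤ ∑ k, |x k * y k| := Finset.abs_sum_le_sum_abs _ _
    _ = ∑ k, |x k| * |y k| := by simp [abs_mul]
    _ ≤ ∑ k, |x k| * (∑ j, |y j|) := by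
        refine Finset.sum_le_sum fun k _ => ?_
        exact mul_le_mul_of_nonneg_left
          (Finset.single_le_sum (f := fun j => |y j|) (fun j _ => abs_nonneg _)
            (Finset.mem_univ k)) (abs_nonneg _)
    _ = (∑ k, |x k|) * (∑ j, |y j|) := by rw [← Finset.sum_mul]

lemma rep_eq {v : Fin d → Fin n → ℝ} {I : Finset (Fin d)} {uuI : Fin d → Fin n → ℝ}
    (hind : LinearIndependent ℝ (fun i : {x // x ∈ I} => v i.1)) (hcard : I.card = n)
    (hdual : ∀ i ∈ I, ∀ j ∈ I, dotp (uuI i) (v j) = if i = j then 1 else 0)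
    (x : Fin n → ℝ) : x = ∑ i ∈ I, dotp (uuI i) x • v i := by
  classical
  rcases Nat.eq_zero_or_pos n with hn | hn
  · subst hn
    have hI : I = ∅ := Finset.card_eq_zero.1 hcard
    subst hI
    simp only [Finset.sum_empty]
    exact Subsingleton.elim _ _
  · have hne : I.Nonempty := Finset.card_pos.1 (by rw [hcard]; exact hn)
    have : Nonempty {x // x ∈ I} := ⟨⟨hne.choose, hne.choose_spec⟩⟩
    have hspan : Submodule.span ℝ (Set.range fun i : {x // x ∈ I} => v i.1) = ⊤ := by
      apply hind.span_eq_top_of_card_eq_finrank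
      rw [Fintype.card_coe, hcard, Module.finrank_fin_fun]
    obtain ⟨cc, hcc⟩ := (Submodule.mem_span_range_iff_exists_fun ℝ).1
      (by rw [hspan]; exact Submodule.mem_top : x ∈ Submodule.span ℝ
        (Set.range fun i : {x // x ∈ I} => v i.1))
    set cf : Fin d → ℝ := fun j => if h : j ∈ I then cc ⟨j, h⟩ else 0 with hcf
    have hx : ∑ j ∈ I, cf j • v j = x := by
      rw [← hcc, ← Finset.sum_coe_sort I (fun j => cf j • v j)]
      exact Finset.sum_congr rfl fun i _ => by simp [hcf, i.2]
    have hcoords : ∀ i ∈ I, dotp (uuI i) x = cf i := by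
      intro i hi
      rw [← hx, dotp_sum]
      have hterm : ∀ j ∈ I, dotp (uuI i) (cf j • v j) = if i = j then cf j else 0 := fun j hj => by
        rw [dotp_smul, hdual i hi j hj]
        split <;> simp
      rw [Finset.sum_congr rfl hterm, Finset.sum_ite_eq I i cf, if_pos hi]
    conv_lhs => rw [← hx]
    exact Finset.sum_congr rfl fun i hi => by rw [hcoords i hi]

lemma neg_one_sq_pow (k : ℕ) : ((-1 : ℤ)^k) * ((-1 : ℤ)^k) = 1 := by
  rw [← pow_add]
  exact Even.neg_one_pow ⟨k, rfl⟩

/-- Alternating sum over an interval of subsets. -/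
lemma altsum {α : Type*} [DecidableEq α] (A B : Finset α) :
    ∑ K ∈ B.powerset.filter (fun K => A ⊆ K), (-1 : ℤ)^K.card =
      if A = B then (-1 : ℤ)^A.card else 0 := by
  by_cases hAB : A ⊆ B
  · have hbij : ∑ K ∈ B.powerset.filter (fun K => A ⊆ K), (-1 : ℤ)^K.card
        = ∑ K ∈ (B \ A).powerset, (-1 : ℤ)^(K.card + A.card) := by
      refine Finset.sum_nbij' (fun K => K \ A) (fun K => K ∪ A) ?_ ?_ ?_ ?_ ?_
      · intro K hK
        obtain ⟨hKB, hAK⟩ := Finset.mem_filter.1 hK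
        exact Finset.mem_powerset.2
          (Finset.sdiff_subset_sdiff (Finset.mem_powerset.1 hKB) (Finset.Subset.refl A))
      · intro K hK
        have hKBA := Finset.mem_powerset.1 hK
        refine Finset.mem_filter.2 ⟨Finset.mem_powerset.2 ?_, Finset.subset_union_right⟩
        exact Finset.union_subset (hKBA.trans (Finset.sdiff_subset)) hAB
      · intro K hK
        obtain ⟨_, hAK⟩ := Finset.mem_filter.1 hK
        exact Finset.sdiff_union_of_subset hAK
      · intro K hK
        have hKBA := Finset.mem_powerset.1 hK
        exact Finset.union_sdiff_cancel_right
          (Finset.disjoint_of_subset_left hKBA (Finset.sdiff_disjoint))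
      · intro K hK
        obtain ⟨_, hAK⟩ := Finset.mem_filter.1 hK
        rw [Finset.card_sdiff_add_card_eq_card hAK]
    rw [hbij]
    have : ∑ K ∈ (B \ A).powerset, (-1 : ℤ)^(K.card + A.card)
        = (∑ K ∈ (B \ A).powerset, (-1 : ℤ)^K.card) * (-1 : ℤ)^A.card := by
      rw [Finset.sum_mul]
      exact Finset.sum_congr rfl fun K _ => by rw [pow_add]
    rw [this, Finset.sum_powerset_neg_one_pow_card]
    by_cases hBA : B \ A = ∅
    · have : A = B := Finset.Subset.antisymm hAB (Finset.sdiff_eq_empty_iff_subset.1 hBA)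
      rw [if_pos hBA, if_pos this, one_mul]
    · have : A ≠ B := fun h => hBA (by rw [h]; exact Finset.sdiff_eq_empty_iff_subset.2 (Finset.Subset.refl B))
      rw [if_neg hBA, if_neg this, zero_mul]
  · have hempty : B.powerset.filter (fun K => A ⊆ K) = ∅ := by
      refine Finset.filter_eq_empty_iff.2 fun K hK hAK => ?_
      exact hAB (hAK.trans (Finset.mem_powerset.1 hK))
    rw [hempty, Finset.sum_empty, if_neg (fun h : A = B => hAB (by rw [h]))]

/-- A finite family of proper subspaces misses a dense open set. -/
lemma dense_open_avoid {α : Type*} [DecidableEq α] (s : Finset α)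
    (p : α → Submodule ℝ (Fin n → ℝ)) :
    (∀ a ∈ s, p a ≠ ⊤) →
    IsOpen {x : Fin n → ℝ | ∀ a ∈ s, x ∉ p a} ∧ Dense {x : Fin n → ℝ | ∀ a ∈ s, x ∉ p a} := by
  induction s using Finset.induction_on with
  | empty =>
      intro _
      have h : {x : Fin n → ℝ | ∀ a ∈ (∅ : Finset α), x ∉ p a} = Set.univ := by
        ext x; simp
      rw [h]
      exact ⟨isOpen_univ, dense_univ⟩
  | @insert a s ha ih =>
      intro hp
      have hset : {x : Fin n → ℝ | ∀ b ∈ insert a s, x ∉ p b}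
          = {x : Fin n → ℝ | x ∉ p a} ∩ {x : Fin n → ℝ | ∀ b ∈ s, x ∉ p b} := by
        ext x
        simp only [Set.mem_inter_iff, Set.mem_setOf_eq, Finset.mem_insert]
        constructor
        · intro h; exact ⟨h a (Or.inl rfl), fun b hb => h b (Or.inr hb)⟩
        · rintro ⟨h1, h2⟩ b (rfl | hb)
          · exact h1
          · exact h2 b hb
      rw [hset]
      have hclosed : IsClosed ((p a : Set (Fin n → ℝ))) := Submodule.closed_of_finiteDimensional _
      have heq : {x : Fin n → ℝ | x ∉ p a} = ((p a : Set (Fin n → ℝ)))ᶜ := rfl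
      have hopen : IsOpen {x : Fin n → ℝ | x ∉ p a} := by rw [heq]; exact hclosed.isOpen_compl
      have hdense : Dense {x : Fin n → ℝ | x ∉ p a} := by
        rw [heq, ← interior_eq_empty_iff_dense_compl]
        by_contra h
        exact hp a (Finset.mem_insert_self a s)
          (Submodule.eq_top_of_nonempty_interior' _ (Set.nonempty_iff_ne_empty.2 h))
      obtain ⟨ih1, ih2⟩ := ih fun b hb => hp b (Finset.mem_insert_of_mem hb)
      exact ⟨hopen.inter ih1, hdense.inter_of_isOpen_left ih2 hopen⟩

lemma continuous_dotp {m : ℕ} (a : Fin m → ℝ) : Continuous fun x : Fin m → ℝ => dotp a x := by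
  unfold dotp
  exact continuous_finset_sum _ fun k _ => continuous_const.mul (continuous_apply k)

namespace MultiFan

/-- In any nonempty open set there is a fully generic vector. -/
lemma exists_generic (Δ : MultiFan n d) (uu : Finset (Fin d) → Fin d → (Fin n → ℝ))
    (huu : Δ.DualBasis uu) (U : Set (Fin n → ℝ)) (hU : IsOpen U) (hne : U.Nonempty) :
    ∃ ζ ∈ U, Δ.GenericDual uu ζ ∧ Δ.GenericFor ∅ ζ := by
  classical
  set Q : Finset (Finset (Fin d) × Fin d) :=
    ((Δ.S.filter fun I => I.card = n) ×ˢ Finset.univ).filter (fun q => q.2 ∈ q.1) with hQ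
  have h1 := dense_open_avoid Q (fun q => LinearMap.ker (dotpL (uu q.1 q.2))) (by
    intro q hq
    obtain ⟨hq1, hq2⟩ := Finset.mem_filter.1 hq
    obtain ⟨hqS, -⟩ := Finset.mem_product.1 hq1
    obtain ⟨hqS', hqcard⟩ := Finset.mem_filter.1 hqS
    intro htop
    rw [LinearMap.ker_eq_top] at htop
    have h1 : dotpL (uu q.1 q.2) (Δ.v q.2) = 1 := by
      rw [← dotp_eq_dotpL, huu q.1 hqS' hqcard q.2 hq2 q.2 hq2, if_pos rfl]
    rw [htop] at h1
    simp at h1)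
  have h2 := dense_open_avoid (Δ.S.filter fun L => L.card < n)
    (fun L => Submodule.span ℝ (Δ.v '' (L : Set (Fin d)))) (by
    intro L hL
    obtain ⟨hLS, hLcard⟩ := Finset.mem_filter.1 hL
    intro htop
    have htop' : Submodule.span ℝ (Δ.v '' (L : Set (Fin d))) = ⊤ := htop
    have hle : Set.finrank ℝ ((L.image Δ.v : Finset (Fin n → ℝ)) : Set (Fin n → ℝ)) ≤ (L.image Δ.v).card :=
      finrank_span_finset_le_card (L.image Δ.v)
    have himg : ((L.image Δ.v : Finset (Fin n → ℝ)) : Set (Fin n → ℝ)) = Δ.v '' (L : Set (Fin d)) := by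
      rw [Finset.coe_image]
    rw [himg] at hle
    unfold Set.finrank at hle
    rw [htop', finrank_top, Module.finrank_fin_fun] at hle
    have := (Finset.card_image_le (s := L) (f := Δ.v)).trans_lt hLcard
    omega)
  have hdense : Dense ({x : Fin n → ℝ | ∀ q ∈ Q, x ∉ LinearMap.ker (dotpL (uu q.1 q.2))}
      ∩ {x : Fin n → ℝ | ∀ L ∈ Δ.S.filter (fun L => L.card < n),
          x ∉ Submodule.span ℝ (Δ.v '' (L : Set (Fin d)))}) :=
    h1.2.inter_of_isOpen_left h2.2 h1.1
  obtain ⟨ζ, hζG, hζU⟩ := hdense.exists_mem_open hU hne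
  obtain ⟨hζ1, hζ2⟩ := hζG
  refine ⟨ζ, hζU, ?_, ?_⟩
  · intro I hIS hIcard i hiI
    have hq : (I, i) ∈ Q := by
      refine Finset.mem_filter.2 ⟨Finset.mem_product.2 ⟨Finset.mem_filter.2 ⟨hIS, hIcard⟩, Finset.mem_univ i⟩, hiI⟩
    have hker := hζ1 (I, i) hq
    simp only [LinearMap.mem_ker, ← dotp_eq_dotpL] at hker
    exact hker
  · intro L hLS _ hLcard
    exact hζ2 L (Finset.mem_filter.2 ⟨hLS, hLcard⟩)

/-- The DH function only depends on the sign pattern of `ξ` on the dual vectors. -/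
lemma DH_congr (Δ : MultiFan n d) (c : Fin d → ℝ) (uu : Finset (Fin d) → Fin d → (Fin n → ℝ))
    (ξ ξ' : Fin n → ℝ)
    (h : ∀ I ∈ Δ.S, I.card = n → ∀ i ∈ I,
      (0 < dotp (uu I i) ξ ↔ 0 < dotp (uu I i) ξ') ∧ (dotp (uu I i) ξ < 0 ↔ dotp (uu I i) ξ' < 0))
    (u : Fin n → ℝ) : Δ.DH c uu ξ u = Δ.DH c uu ξ' u := by
  classical
  simp only [MultiFan.DH]
  refine Finset.sum_congr rfl fun I hI => ?_
  obtain ⟨hIS, hIcard⟩ := Finset.mem_filter.1 hI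
  have hcond : (∀ i ∈ I, (0 < dotp (uu I i) ξ ∧ c i ≤ dotp u (Δ.v i)) ∨
        (dotp (uu I i) ξ < 0 ∧ dotp u (Δ.v i) ≤ c i)) ↔
      (∀ i ∈ I, (0 < dotp (uu I i) ξ' ∧ c i ≤ dotp u (Δ.v i)) ∨
        (dotp (uu I i) ξ' < 0 ∧ dotp u (Δ.v i) ≤ c i)) := by
    refine forall₂_congr fun i hi => ?_
    rw [(h I hIS hIcard i hi).1, (h I hIS hIcard i hi).2]
  have hcard : (I.filter fun i => 0 < dotp (uu I i) ξ).card
      = (I.filter fun i => 0 < dotp (uu I i) ξ').card := by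
    congr 1
    exact Finset.filter_congr fun i hi => (h I hIS hIcard i hi).1
  exact if_congr hcond (by rw [hcard]) rfl

lemma inproj_iff (Δ : MultiFan n d) (uu : Finset (Fin d) → Fin d → (Fin n → ℝ))
    (huu : Δ.DualBasis uu) {I : Finset (Fin d)} (hI : I ∈ Δ.S) (hcard : I.card = n)
    {K : Finset (Fin d)} (hK : K ⊆ I) {ξ : Fin n → ℝ}
    (hξ : ∀ i ∈ I, dotp (uu I i) ξ ≠ 0) :
    Δ.InProjCone K I ξ ↔ ∀ i ∈ I \ K, 0 < dotp (uu I i) ξ := by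
  classical
  have hdual := huu I hI hcard
  constructor
  · rintro ⟨a, ha, hmem⟩ i hi
    obtain ⟨hiI, hiK⟩ := Finset.mem_sdiff.1 hi
    have h0 : dotp (uu I i) (ξ - ∑ j ∈ I \ K, a j • Δ.v j) = 0 := by
      have hle : Submodule.span ℝ (Δ.v '' (K : Set (Fin d))) ≤ LinearMap.ker (dotpL (uu I i)) := by
        rw [Submodule.span_le]
        rintro y ⟨j, hj, rfl⟩
        have hjK : j ∈ K := hj
        have hjI : j ∈ I := hK hjK
        simp only [SetLike.mem_coe, LinearMap.mem_ker, ← dotp_eq_dotpL]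
        rw [hdual i hiI j hjI, if_neg]
        rintro rfl
        exact hiK hjK
      exact hle hmem
    rw [dotp_sub, dotp_sum] at h0
    have hs : ∀ j ∈ I \ K, dotp (uu I i) (a j • Δ.v j) = if i = j then a j else 0 := fun j hj => by
      rw [dotp_smul, hdual i hiI j (Finset.mem_sdiff.1 hj).1]
      split <;> simp
    rw [Finset.sum_congr rfl hs, Finset.sum_ite_eq (I \ K) i a, if_pos hi] at h0
    have heq : dotp (uu I i) ξ = a i := by linarith
    rcases (ha i hi).lt_or_eq with h | h
    · rwa [heq]
    · exact absurd (heq.trans h.symm) (hξ i hiI)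
  · intro h
    refine ⟨fun j => dotp (uu I j) ξ, fun j hj => (h j hj).le, ?_⟩
    have hrep := rep_eq (Δ.indep I hI) hcard hdual ξ
    have hsplit := Finset.sum_sdiff (f := fun j => dotp (uu I j) ξ • Δ.v j) hK
    have hmem : ξ - ∑ j ∈ I \ K, dotp (uu I j) ξ • Δ.v j
        = ∑ j ∈ K, dotp (uu I j) ξ • Δ.v j := by
      nth_rewrite 1 [hrep]
      rw [← hsplit]
      exact add_sub_cancel_left _ _
    rw [hmem]
    exact Submodule.sum_mem _ fun j hj =>
      Submodule.smul_mem _ _ (Submodule.subset_span ⟨j, hj, rfl⟩)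

lemma dv_eq_zero (Δ : MultiFan n d) {K : Finset (Fin d)} (hK : K ∉ Δ.S) (x : Fin n → ℝ) :
    Δ.dv K x = 0 := by
  classical
  simp only [MultiFan.dv]
  rw [Finset.filter_eq_empty_iff.2, Finset.sum_empty]
  intro I hI
  rintro ⟨-, hKI, -⟩
  exact hK (Δ.downClosed I hI K hKI)

/-- The key identity: for a generic dual vector `ξ` the DH function at `u` is an
alternating sum of the projected degrees `dv K ξ`. -/
lemma keyC (Δ : MultiFan n d) (c : Fin d → ℝ) (uu : Finset (Fin d) → Fin d → (Fin n → ℝ))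
    (huu : Δ.DualBasis uu) (ξ : Fin n → ℝ) (hξ : Δ.GenericDual uu ξ)
    (u : Fin n → ℝ) (hu : ∀ i : Fin d, {i} ∈ Δ.S → dotp u (Δ.v i) ≠ c i) :
    Δ.DH c uu ξ u =
      (-1 : ℤ)^n * ∑ K ∈ (Finset.univ.filter fun i => dotp u (Δ.v i) < c i).powerset,
        (-1 : ℤ)^K.card * Δ.dv K ξ := by
  classical
  set E : Finset (Fin d) := Finset.univ.filter (fun i => dotp u (Δ.v i) < c i) with hE
  have hdv : ∀ K : Finset (Fin d), Δ.dv K ξ =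
      ∑ I ∈ Δ.S.filter (fun I => I.card = n),
        if K ⊆ I ∧ Δ.InProjCone K I ξ then Δ.w I else 0 := by
    intro K
    have hff : Δ.S.filter (fun I => I.card = n ∧ K ⊆ I ∧ Δ.InProjCone K I ξ)
        = (Δ.S.filter fun I => I.card = n).filter (fun I => K ⊆ I ∧ Δ.InProjCone K I ξ) := by
      rw [Finset.filter_filter]
    simp only [MultiFan.dv]
    rw [hff, Finset.sum_filter]
  simp only [MultiFan.DH]
  rw [Finset.mul_sum]
  have hrhs : ∀ K ∈ E.powerset, (-1 : ℤ)^n * ((-1 : ℤ)^K.card * Δ.dv K ξ)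
      = ∑ I ∈ Δ.S.filter (fun I => I.card = n),
          (-1 : ℤ)^n * ((-1 : ℤ)^K.card * (if K ⊆ I ∧ Δ.InProjCone K I ξ then Δ.w I else 0)) :=
    fun K _ => by rw [hdv K, Finset.mul_sum, Finset.mul_sum]
  rw [Finset.sum_congr rfl hrhs, Finset.sum_comm]
  refine Finset.sum_congr rfl fun I hIT => ?_
  obtain ⟨hIS, hIcard⟩ := Finset.mem_filter.1 hIT
  set P : Finset (Fin d) := I.filter (fun i => 0 < dotp (uu I i) ξ) with hP
  have haξ : ∀ i ∈ I, dotp (uu I i) ξ ≠ 0 := fun i hi => hξ I hIS hIcard i hi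
  have hchar : ∀ K ∈ E.powerset,
      ((K ⊆ I ∧ Δ.InProjCone K I ξ) ↔ (I \ P ⊆ K ∧ K ⊆ E ∩ I)) := by
    intro K hKE
    have hKE' : K ⊆ E := Finset.mem_powerset.1 hKE
    constructor
    · rintro ⟨hKI, hproj⟩
      have h := (Δ.inproj_iff uu huu hIS hIcard hKI haξ).1 hproj
      refine ⟨?_, Finset.subset_inter hKE' hKI⟩
      intro i hi
      obtain ⟨hiI, hiP⟩ := Finset.mem_sdiff.1 hi
      by_contra hiK
      exact hiP (Finset.mem_filter.2 ⟨hiI, h i (Finset.mem_sdiff.2 ⟨hiI, hiK⟩)⟩)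
    · rintro ⟨hPK, hKEI⟩
      have hKI : K ⊆ I := hKEI.trans Finset.inter_subset_right
      refine ⟨hKI, (Δ.inproj_iff uu huu hIS hIcard hKI haξ).2 ?_⟩
      intro i hi
      obtain ⟨hiI, hiK⟩ := Finset.mem_sdiff.1 hi
      by_contra hneg
      exact hiK (hPK (Finset.mem_sdiff.2 ⟨hiI,
        fun hiP => hneg (Finset.mem_filter.1 hiP).2⟩))
  have hsum : ∑ K ∈ E.powerset,
      (-1 : ℤ)^n * ((-1 : ℤ)^K.card * (if K ⊆ I ∧ Δ.InProjCone K I ξ then Δ.w I else 0))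
      = (-1 : ℤ)^n * ((if I \ P = E ∩ I then (-1 : ℤ)^((I \ P).card) else 0) * Δ.w I) := by
    rw [← Finset.mul_sum]
    congr 1
    have hterm : ∀ K ∈ E.powerset,
        (-1 : ℤ)^K.card * (if K ⊆ I ∧ Δ.InProjCone K I ξ then Δ.w I else 0)
        = if I \ P ⊆ K ∧ K ⊆ E ∩ I then (-1 : ℤ)^K.card * Δ.w I else 0 := by
      intro K hK
      rw [mul_ite, mul_zero, if_congr (hchar K hK) rfl rfl]
    rw [Finset.sum_congr rfl hterm, ← Finset.sum_filter]
    have hset : E.powerset.filter (fun K => I \ P ⊆ K ∧ K ⊆ E ∩ I)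
        = (E ∩ I).powerset.filter (fun K => I \ P ⊆ K) := by
      ext K
      simp only [Finset.mem_filter, Finset.mem_powerset]
      constructor
      · rintro ⟨h1, h2, h3⟩; exact ⟨h3, h2⟩
      · rintro ⟨h1, h2⟩; exact ⟨h1.trans Finset.inter_subset_left, h2, h1⟩
    rw [hset, ← Finset.sum_mul, altsum (I \ P) (E ∩ I)]
  rw [hsum]
  have hiff : (∀ i ∈ I, (0 < dotp (uu I i) ξ ∧ c i ≤ dotp u (Δ.v i)) ∨
      (dotp (uu I i) ξ < 0 ∧ dotp u (Δ.v i) ≤ c i)) ↔ I \ P = E ∩ I := by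
    constructor
    · intro hcond
      ext i
      constructor
      · intro hi
        obtain ⟨hiI, hiP⟩ := Finset.mem_sdiff.1 hi
        rcases hcond i hiI with ⟨hpos, -⟩ | ⟨hneg, hle⟩
        · exact absurd (Finset.mem_filter.2 ⟨hiI, hpos⟩) hiP
        · have hnec := hu i (Δ.downClosed I hIS {i} (Finset.singleton_subset_iff.2 hiI))
          exact Finset.mem_inter.2 ⟨Finset.mem_filter.2 ⟨Finset.mem_univ i,
            lt_of_le_of_ne hle hnec⟩, hiI⟩
      · intro hi
        obtain ⟨hiE, hiI⟩ := Finset.mem_inter.1 hi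
        have hlt : dotp u (Δ.v i) < c i := (Finset.mem_filter.1 hiE).2
        refine Finset.mem_sdiff.2 ⟨hiI, fun hiP => ?_⟩
        rcases hcond i hiI with ⟨-, hge⟩ | ⟨hneg, -⟩
        · exact absurd hlt (not_lt.2 hge)
        · exact absurd (Finset.mem_filter.1 hiP).2 (not_lt.2 hneg.le)
    · intro hset i hiI
      have hne0 := haξ i hiI
      have hnec := hu i (Δ.downClosed I hIS {i} (Finset.singleton_subset_iff.2 hiI))
      rcases lt_or_gt_of_ne hne0 with hneg | hpos
      · right
        refine ⟨hneg, ?_⟩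
        have hiIP : i ∈ I \ P := Finset.mem_sdiff.2 ⟨hiI,
          fun hiP => absurd (Finset.mem_filter.1 hiP).2 (not_lt.2 hneg.le)⟩
        rw [hset] at hiIP
        exact ((Finset.mem_filter.1 (Finset.mem_inter.1 hiIP).1).2).le
      · left
        refine ⟨hpos, ?_⟩
        have hiP : i ∈ P := Finset.mem_filter.2 ⟨hiI, hpos⟩
        have hnotin : i ∉ I \ P := fun h => (Finset.mem_sdiff.1 h).2 hiP
        rw [hset] at hnotin
        have hnl : ¬ dotp u (Δ.v i) < c i := fun hlt => hnotin
          (Finset.mem_inter.2 ⟨Finset.mem_filter.2 ⟨Finset.mem_univ i, hlt⟩, hiI⟩)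
        exact not_lt.1 hnl
  by_cases hc : I \ P = E ∩ I
  · rw [if_pos (hiff.2 hc), if_pos hc]
    have hPI : P ⊆ I := Finset.filter_subset _ _
    have hcardP : P.card ≤ n := hIcard ▸ Finset.card_le_card hPI
    have h1 : (I \ P).card = n - P.card := by rw [Finset.card_sdiff_of_subset hPI, hIcard]
    rw [h1]
    have h2 : (-1 : ℤ)^n = (-1 : ℤ)^(n - P.card) * (-1 : ℤ)^(P.card) := by
      rw [← pow_add, Nat.sub_add_cancel hcardP]
    calc (-1 : ℤ)^P.card * Δ.w I
        = ((-1 : ℤ)^(n - P.card) * (-1 : ℤ)^(n - P.card)) * ((-1 : ℤ)^P.card * Δ.w I) := by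
          rw [neg_one_sq_pow, one_mul]
      _ = ((-1 : ℤ)^(n - P.card) * (-1 : ℤ)^P.card) * ((-1 : ℤ)^(n - P.card) * Δ.w I) := by ring
      _ = (-1 : ℤ)^n * ((-1 : ℤ)^(n - P.card) * Δ.w I) := by rw [← h2]
  · rw [if_neg (fun h => hc (hiff.1 h)), if_neg hc, zero_mul, mul_zero]

/-- Independence of the generic vector. -/
lemma DH_indep (Δ : MultiFan n d) (hC : Δ.Complete) (c : Fin d → ℝ)
    (uu : Finset (Fin d) → Fin d → (Fin n → ℝ)) (huu : Δ.DualBasis uu)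
    (ξ ξ' : Fin n → ℝ) (hξ : Δ.GenericDual uu ξ) (hξ' : Δ.GenericDual uu ξ')
    (u : Fin n → ℝ) (hu : ∀ i : Fin d, {i} ∈ Δ.S → dotp u (Δ.v i) ≠ c i) :
    Δ.DH c uu ξ u = Δ.DH c uu ξ' u := by
  classical
  -- a sign-preserving fully generic perturbation of any generic-dual vector
  have perturb : ∀ ζ₀ : Fin n → ℝ, Δ.GenericDual uu ζ₀ →
      ∃ ζ : Fin n → ℝ, Δ.GenericDual uu ζ ∧ Δ.GenericFor ∅ ζ ∧
        Δ.DH c uu ζ₀ u = Δ.DH c uu ζ u := by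
    intro ζ₀ hζ₀
    set Q : Finset (Finset (Fin d) × Fin d) :=
      ((Δ.S.filter fun I => I.card = n) ×ˢ Finset.univ).filter (fun q => q.2 ∈ q.1) with hQ
    set W : Set (Fin n → ℝ) :=
      {ζ | ∀ q ∈ Q, 0 < dotp (uu q.1 q.2) ζ₀ * dotp (uu q.1 q.2) ζ} with hW
    have hWopen : IsOpen W := by
      have : W = ⋂ q ∈ Q, {ζ : Fin n → ℝ | 0 < dotp (uu q.1 q.2) ζ₀ * dotp (uu q.1 q.2) ζ} := by
        ext ζ
        simp [hW, Set.mem_iInter]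
      rw [this]
      refine isOpen_biInter_finset fun q _ => ?_
      exact isOpen_lt continuous_const (continuous_const.mul (continuous_dotp _))
    have hWmem : ζ₀ ∈ W := by
      intro q hq
      obtain ⟨hq1, hq2⟩ := Finset.mem_filter.1 hq
      obtain ⟨hqS, -⟩ := Finset.mem_product.1 hq1
      obtain ⟨hqS', hqcard⟩ := Finset.mem_filter.1 hqS
      exact mul_self_pos.2 (hζ₀ q.1 hqS' hqcard q.2 hq2)
    obtain ⟨ζ, hζW, hζGD, hζGF⟩ := Δ.exists_generic uu huu W hWopen ⟨ζ₀, hWmem⟩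
    have hsig : ∀ I ∈ Δ.S, I.card = n → ∀ i ∈ I,
        (0 < dotp (uu I i) ζ₀ ↔ 0 < dotp (uu I i) ζ) ∧
        (dotp (uu I i) ζ₀ < 0 ↔ dotp (uu I i) ζ < 0) := by
      intro I hIS hIcard i hiI
      have hq : (I, i) ∈ Q := Finset.mem_filter.2
        ⟨Finset.mem_product.2 ⟨Finset.mem_filter.2 ⟨hIS, hIcard⟩, Finset.mem_univ i⟩, hiI⟩
      have hpos := hζW (I, i) hq
      exact ⟨pos_iff_pos_of_mul_pos hpos, neg_iff_neg_of_mul_pos hpos⟩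
    exact ⟨ζ, hζGD, hζGF, Δ.DH_congr c uu ζ₀ ζ hsig u⟩
  obtain ⟨ζ, hζGD, hζGF, hζeq⟩ := perturb ξ hξ
  obtain ⟨ζ', hζGD', hζGF', hζeq'⟩ := perturb ξ' hξ'
  rw [hζeq, hζeq']
  rw [Δ.keyC c uu huu ζ hζGD u hu, Δ.keyC c uu huu ζ' hζGD' u hu]
  congr 1
  refine Finset.sum_congr rfl fun K _ => ?_
  congr 1
  by_cases hKS : K ∈ Δ.S
  · exact (hC K hKS).2 ζ ζ'
      (fun L hL _ hLc => hζGF L hL (Finset.empty_subset L) hLc)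
      (fun L hL _ hLc => hζGF' L hL (Finset.empty_subset L) hLc)
  · rw [Δ.dv_eq_zero hKS, Δ.dv_eq_zero hKS]

end MultiFan

end Aux

/-- **Lemma 5.4**: the support of the Duistermaat–Heckman function of a simple
multi-polytope is bounded, and on `V^* ∖ ∪ F_i` the function is independent of the choice
of the generic vector `ξ ∈ V` used in its definition. -/
theorem stmt6 (n d : ℕ) (Δ : MultiFan n d) (hC : Δ.Complete)
    (c : Fin d → ℝ) (uu : Finset (Fin d) → Fin d → (Fin n → ℝ)) (huu : Δ.DualBasis uu) :
    (∀ ξ : Fin n → ℝ, Δ.GenericDual uu ξ →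
       ∃ R : ℝ, ∀ u : Fin n → ℝ, (∀ i : Fin d, {i} ∈ Δ.S → dotp u (Δ.v i) ≠ c i) →
         R < ∑ k, |u k| → Δ.DH c uu ξ u = 0) ∧
    (∀ ξ ξ' : Fin n → ℝ, Δ.GenericDual uu ξ → Δ.GenericDual uu ξ' →
       ∀ u : Fin n → ℝ, (∀ i : Fin d, {i} ∈ Δ.S → dotp u (Δ.v i) ≠ c i) →
         Δ.DH c uu ξ u = Δ.DH c uu ξ' u) := by
  classical
  constructor
  · -- bounded support
    intro ξ hξ
    rcases Nat.eq_zero_or_pos n with hn | hn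
    · refine ⟨0, fun u _ hR => ?_⟩
      exfalso
      subst hn
      simp only [Finset.univ_eq_empty, Finset.sum_empty] at hR
      exact lt_irrefl 0 hR
    · set T : Finset (Finset (Fin d)) := Δ.S.filter (fun I => I.card = n) with hT
      set C : ℝ := ∑ I ∈ T, ∑ i ∈ I, |c i| * ∑ k, |uu I i k| with hCdef
      have hC0 : 0 ≤ C := Finset.sum_nonneg fun I _ => Finset.sum_nonneg fun i _ =>
        mul_nonneg (abs_nonneg _) (Finset.sum_nonneg fun k _ => abs_nonneg _)
      refine ⟨(n : ℝ) * (2 * C + 2), fun u hu hR => ?_⟩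
      set N : ℝ := ∑ k, |u k| with hN
      have hN0 : 0 ≤ N := by
        rw [hN]; exact Finset.sum_nonneg fun k _ => abs_nonneg _
      have hn1 : (1 : ℝ) ≤ (n : ℝ) := by exact_mod_cast hn
      have hN1 : 1 ≤ N := by
        nlinarith [mul_nonneg (by linarith : (0:ℝ) ≤ (n:ℝ)) hC0]
      -- find a generic-dual vector near `-u`
      set U : Set (Fin n → ℝ) := {ζ | (∑ k, |ζ k + u k|) < 1} with hU
      have hUopen : IsOpen U := by
        have hcont : Continuous fun ζ : Fin n → ℝ => ∑ k, |ζ k + u k| :=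
          continuous_finset_sum _ fun k _ => ((continuous_apply k).add continuous_const).abs
        exact isOpen_lt hcont continuous_const
      have hUne : U.Nonempty := ⟨-u, by simp [hU]⟩
      obtain ⟨ζ, hζU, hζGD, -⟩ := Δ.exists_generic uu huu U hUopen hUne
      have hζU' : (∑ k, |ζ k + u k|) < 1 := hζU
      -- DH vanishes at ζ
      have hvanish : Δ.DH c uu ζ u = 0 := by
        simp only [MultiFan.DH]
        refine Finset.sum_eq_zero fun I hI => ?_
        obtain ⟨hIS, hIcard⟩ := Finset.mem_filter.1 hI
        rw [if_neg]
        intro hcond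
        -- each term of the sum below is positive
        have hIne : I.Nonempty := Finset.card_pos.1 (by rw [hIcard]; exact hn)
        have hpos : 0 < ∑ i ∈ I, (dotp u (Δ.v i) - c i) * dotp (uu I i) ζ := by
          refine Finset.sum_pos (fun i hi => ?_) hIne
          have hnec := hu i (Δ.downClosed I hIS {i} (Finset.singleton_subset_iff.2 hi))
          rcases hcond i hi with ⟨hp, hge⟩ | ⟨hng, hle⟩
          · refine mul_pos ?_ hp
            rcases lt_or_eq_of_le hge with h | h
            · linarith
            · exact absurd h.symm hnec
          · refine mul_pos_of_neg_of_neg ?_ hng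
            rcases lt_or_eq_of_le hle with h | h
            · linarith
            · exact absurd h hnec
        -- rewrite the sum
        have hrep := rep_eq (Δ.indep I hIS) hIcard (huu I hIS hIcard) ζ
        have hduζ : dotp u ζ = ∑ i ∈ I, dotp (uu I i) ζ * dotp u (Δ.v i) := by
          conv_lhs => rw [hrep]
          rw [dotp_sum]
          exact Finset.sum_congr rfl fun i _ => by rw [dotp_smul]
        have hexp : ∑ i ∈ I, (dotp u (Δ.v i) - c i) * dotp (uu I i) ζ
            = dotp u ζ - ∑ i ∈ I, c i * dotp (uu I i) ζ := by
          rw [hduζ, ← Finset.sum_sub_distrib]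
          exact Finset.sum_congr rfl fun i _ => by ring
        rw [hexp] at hpos
        -- bounds
        have hb1 : dotp u ζ ≤ N - dotp u u := by
          have h0 := dotp_sub u (ζ + u) u
          simp only [add_sub_cancel_right] at h0
          have h2 : |dotp u (ζ + u)| ≤ N * (∑ k, |(ζ + u) k|) := by
            rw [hN]; exact abs_dotp_le u (ζ + u)
          have h3 : (∑ k, |(ζ + u) k|) = ∑ k, |ζ k + u k| :=
            Finset.sum_congr rfl fun k _ => rfl
          have h4 : dotp u (ζ + u) ≤ N * 1 := by
            calc dotp u (ζ + u) ≤ |dotp u (ζ + u)| := le_abs_self _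
              _ ≤ N * (∑ k, |ζ k + u k|) := by rw [← h3]; exact h2
              _ ≤ N * 1 := mul_le_mul_of_nonneg_left hζU'.le hN0
          linarith
        have hb2 : N ^ 2 ≤ (n : ℝ) * dotp u u := by
          have hcs := Finset.sum_mul_sq_le_sq_mul_sq Finset.univ (fun k => |u k|) (fun _ => (1 : ℝ))
          simp only [mul_one, one_pow] at hcs
          have hsq : ∑ k : Fin n, |u k| ^ 2 = dotp u u := by
            simp only [sq_abs, dotp]
            exact Finset.sum_congr rfl fun k _ => by ring
          have hcard : (∑ _k : Fin n, (1 : ℝ)) = (n : ℝ) := by simp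
          rw [hsq, hcard] at hcs
          rw [hN]
          calc (∑ k, |u k|) ^ 2 ≤ dotp u u * (n : ℝ) := hcs
            _ = (n : ℝ) * dotp u u := by ring
        have hζb : (∑ k, |ζ k|) ≤ 1 + N := by
          have habs : ∀ k, |ζ k| ≤ |ζ k + u k| + |u k| := fun k => by
            have h := abs_add_le (ζ k + u k) (-(u k))
            simp only [add_neg_cancel_right, abs_neg] at h
            exact h
          calc (∑ k, |ζ k|) ≤ ∑ k, (|ζ k + u k| + |u k|) :=
              Finset.sum_le_sum fun k _ => habs k
            _ = (∑ k, |ζ k + u k|) + ∑ k, |u k| := Finset.sum_add_distrib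
            _ ≤ 1 + N := by rw [← hN]; linarith
        have hIT : I ∈ T := by rw [hT]; exact Finset.mem_filter.2 ⟨hIS, hIcard⟩
        have hb3 : |∑ i ∈ I, c i * dotp (uu I i) ζ| ≤ C * (1 + N) := by
          calc |∑ i ∈ I, c i * dotp (uu I i) ζ|
              ≤ ∑ i ∈ I, |c i * dotp (uu I i) ζ| := Finset.abs_sum_le_sum_abs _ _
            _ = ∑ i ∈ I, |c i| * |dotp (uu I i) ζ| := by
                exact Finset.sum_congr rfl fun i _ => abs_mul _ _
            _ ≤ ∑ i ∈ I, |c i| * ((∑ k, |uu I i k|) * (1 + N)) := by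
                refine Finset.sum_le_sum fun i _ => ?_
                refine mul_le_mul_of_nonneg_left ?_ (abs_nonneg _)
                calc |dotp (uu I i) ζ| ≤ (∑ k, |uu I i k|) * (∑ k, |ζ k|) := abs_dotp_le _ _
                  _ ≤ (∑ k, |uu I i k|) * (1 + N) :=
                      mul_le_mul_of_nonneg_left hζb (Finset.sum_nonneg fun k _ => abs_nonneg _)
            _ = (∑ i ∈ I, |c i| * (∑ k, |uu I i k|)) * (1 + N) := by
                rw [Finset.sum_mul]
                exact Finset.sum_congr rfl fun i _ => by ring
            _ ≤ C * (1 + N) := by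
                refine mul_le_mul_of_nonneg_right ?_ (by linarith)
                rw [hCdef]
                refine Finset.single_le_sum (f := fun J => ∑ i ∈ J, |c i| * ∑ k, |uu J i k|)
                  (fun J _ => Finset.sum_nonneg fun i _ =>
                    mul_nonneg (abs_nonneg _) (Finset.sum_nonneg fun k _ => abs_nonneg _)) hIT
        have hSlow : -(C * (1 + N)) ≤ ∑ i ∈ I, c i * dotp (uu I i) ζ := (abs_le.1 hb3).1
        have hduu : dotp u u < N + C * (1 + N) := by linarith
        have hmul : (n : ℝ) * dotp u u < (n : ℝ) * (N + C * (1 + N)) :=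
          mul_lt_mul_of_pos_left hduu (by linarith)
        have hNpos : (0 : ℝ) < N := by linarith
        have hmul2 : (n : ℝ) * (2 * C + 2) * N < N * N :=
          mul_lt_mul_of_pos_right hR hNpos
        have hCN : C ≤ C * N := by nlinarith
        nlinarith [hb2, hmul, hmul2,
          mul_nonneg (by linarith : (0:ℝ) ≤ (n:ℝ)) (by linarith : (0:ℝ) ≤ C * N - C),
          mul_pos (by linarith : (0:ℝ) < (n:ℝ)) hNpos]
      have hind := Δ.DH_indep hC c uu huu ξ ζ hξ hζGD u hu
      exact hind.trans hvanish
  · intro ξ ξ' hξ hξ' u hu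
    exact Δ.DH_indep hC c uu huu ξ ξ' hξ hξ' u hu
end

section
/- Let Δ be a complete simplicial multi-fan of dimension n whose simplicial set Σ has vertex set {1,...,d}, and fix an orientation of V. For each I = {i_1,...,i_n} ∈ Σ^{(n)} let ⟨I⟩ be the oriented (n−1)-simplex ±⟨i_1,...,i_n⟩, with sign +1 iff (v_{i_1},...,v_{i_n}) is a positively oriented basis of V. Then the chain Σ_{I∈Σ^{(n)}} w(I)⟨I⟩ is a cycle in the simplicial chain complex of Σ. -/
open Finset

open scoped Classical in
/-- The orientation sign `ε(I)` of a top simplex `I = {i_1 < … < i_n}`: `+1` iff the ordered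
basis `(v_{i_1}, …, v_{i_n})` is positively oriented w.r.t. the standard orientation of `ℝⁿ`. -/
noncomputable def MultiFan.epsSign {n d : ℕ} (Δ : MultiFan n d) (I : Finset (Fin d)) : ℤ :=
  if h : I.card = n then
    (if 0 < Matrix.det (Matrix.of fun k l : Fin n => Δ.v ((I.orderIsoOfFin h k : {x // x ∈ I}) : Fin d) l)
     then 1 else -1)
  else 0

private theorem stmt7_detkey {m : ℕ} (f : Fin (m+1) → (Fin (m+1) → ℝ)) :
    Matrix.det (Matrix.of f) ≠ 0 ↔ LinearIndependent ℝ f := by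
  rw [show (LinearIndependent ℝ f) = (LinearIndependent ℝ (Matrix.of f).row) from rfl,
    Matrix.linearIndependent_rows_iff_isUnit, Matrix.isUnit_iff_isUnit_det]
  exact isUnit_iff_ne_zero.symm

private theorem stmt7_snoc_eq_update {m : ℕ} (rows : Fin m → (Fin (m+1) → ℝ))
    (u : Fin (m+1) → ℝ) :
    Matrix.of (Fin.snoc rows u)
      = Matrix.updateRow (Matrix.of (Fin.snoc rows 0)) (Fin.last m) u := by
  ext k l
  refine Fin.lastCases ?_ (fun k => ?_) k
  · simp [Matrix.updateRow_apply]
  · simp [Matrix.updateRow_apply, Fin.snoc_castSucc, (Fin.castSucc_lt_last k).ne]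

private theorem stmt7_eta_add {m : ℕ} (rows : Fin m → (Fin (m+1) → ℝ)) (x y : Fin (m+1) → ℝ) :
    Matrix.det (Matrix.of (Fin.snoc rows (x + y)))
      = Matrix.det (Matrix.of (Fin.snoc rows x)) + Matrix.det (Matrix.of (Fin.snoc rows y)) := by
  rw [stmt7_snoc_eq_update rows (x+y), stmt7_snoc_eq_update rows x, stmt7_snoc_eq_update rows y,
    Matrix.det_updateRow_add]

private theorem stmt7_eta_smul {m : ℕ} (rows : Fin m → (Fin (m+1) → ℝ)) (a : ℝ)
    (x : Fin (m+1) → ℝ) :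
    Matrix.det (Matrix.of (Fin.snoc rows (a • x)))
      = a * Matrix.det (Matrix.of (Fin.snoc rows x)) := by
  rw [stmt7_snoc_eq_update rows (a • x), stmt7_snoc_eq_update rows x, Matrix.det_updateRow_smul]

private theorem stmt7_dc {m : ℕ} (S : Finset (Fin m))
    (hdc : ∀ ⦃a b : Fin m⦄, b ≤ a → a ∈ S → b ∈ S) (k : Fin m) :
    k ∈ S ↔ (k : ℕ) < S.card := by
  constructor
  · intro hk
    have hsub : Finset.Iic k ⊆ S := fun j hj => hdc (Finset.mem_Iic.mp hj) hk
    have := Finset.card_le_card hsub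
    rw [Fin.card_Iic] at this
    omega
  · intro hk
    by_contra hkS
    have hsub : S ⊆ Finset.Iio k := by
      intro j hj
      rw [Finset.mem_Iio]
      by_contra hjk
      exact hkS (hdc (not_lt.mp hjk) hj)
    have := Finset.card_le_card hsub
    rw [Fin.card_Iio] at this
    omega

private theorem stmt7_boundary {d m : ℕ} [DecidableEq (Fin d)] (J : Finset (Fin d))
    (hJm : J.card = m) (i : Fin d) (hiJ : i ∉ J) (k : Fin m) :
    J.orderEmbOfFin hJm k < i ↔ (k : ℕ) < (J.filter (· < i)).card := by
  classical
  set S : Finset (Fin m) := Finset.univ.filter (fun k : Fin m => J.orderEmbOfFin hJm k < i)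
    with hS
  have hmemS : ∀ k : Fin m, k ∈ S ↔ J.orderEmbOfFin hJm k < i := by
    intro k; simp [hS]
  have hdc : ∀ ⦃a b : Fin m⦄, b ≤ a → a ∈ S → b ∈ S := by
    intro a b hba ha
    rw [hmemS] at ha ⊢
    exact lt_of_le_of_lt ((J.orderEmbOfFin hJm).monotone hba) ha
  have hcard : S.card = (J.filter (· < i)).card := by
    apply Finset.card_bij (fun k _ => J.orderEmbOfFin hJm k)
    · intro k hk
      rw [hmemS] at hk
      exact Finset.mem_filter.mpr ⟨Finset.orderEmbOfFin_mem J hJm k, hk⟩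
    · intro a ha b hb hab
      exact (J.orderEmbOfFin hJm).injective hab
    · intro b hb
      rw [Finset.mem_filter] at hb
      have : b ∈ Set.range (J.orderEmbOfFin hJm) := by
        rw [Finset.range_orderEmbOfFin]; exact hb.1
      obtain ⟨k, hk⟩ := this
      exact ⟨k, (hmemS k).mpr (hk ▸ hb.2), hk⟩
  rw [← hcard, ← hmemS]
  exact stmt7_dc S hdc k

private theorem stmt7_signIf (r : ℝ) (hr : r ≠ 0) (e : ℕ) :
    (if 0 < (-1:ℝ)^e * r then (1:ℤ) else -1) = (-1)^e * (if 0 < r then 1 else -1) := by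
  rcases Nat.even_or_odd e with he | he
  · rw [he.neg_one_pow, he.neg_one_pow, one_mul, one_mul]
  · rw [he.neg_one_pow, he.neg_one_pow, neg_one_mul, neg_one_mul]
    rcases lt_or_gt_of_ne hr with h | h
    · rw [if_pos (by linarith), if_neg (not_lt.mpr h.le), neg_neg]
    · rw [if_neg (by simp; linarith), if_pos h]

private theorem stmt7_enum {d m : ℕ} [DecidableEq (Fin d)] {J : Finset (Fin d)} (hJm : J.card = m)
    {i : Fin d} (hiJ : i ∉ J) (hI : (insert i J).card = m + 1) (k : Fin (m+1)) :
    (insert i J).orderEmbOfFin hI k =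
      if h : (k:ℕ) < (J.filter (· < i)).card
      then J.orderEmbOfFin hJm ⟨k, by have := Finset.card_filter_le J (· < i); omega⟩
      else if h2 : (k:ℕ) = (J.filter (· < i)).card then i
      else J.orderEmbOfFin hJm ⟨(k:ℕ) - 1,
        by have := Finset.card_filter_le J (· < i); have := k.isLt; omega⟩ := by
  have hpm : (J.filter (· < i)).card ≤ m := by
    have := Finset.card_filter_le J (· < i); omega
  set p := (J.filter (· < i)).card with hp
  set f : Fin (m+1) → Fin d := fun k =>
      if h : (k:ℕ) < p
      then J.orderEmbOfFin hJm ⟨k, by omega⟩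
      else if h2 : (k:ℕ) = p then i
      else J.orderEmbOfFin hJm ⟨(k:ℕ) - 1, by have := k.isLt; omega⟩ with hf
  have hfs : ∀ x, f x ∈ insert i J := by
    intro x
    rw [hf]
    dsimp only
    split_ifs with h h2
    · exact Finset.mem_insert_of_mem (Finset.orderEmbOfFin_mem J hJm _)
    · exact Finset.mem_insert_self i _
    · exact Finset.mem_insert_of_mem (Finset.orderEmbOfFin_mem J hJm _)
  have hbd : ∀ k : Fin m, J.orderEmbOfFin hJm k < i ↔ (k : ℕ) < p :=
    stmt7_boundary J hJm i hiJ
  have hmono : StrictMono f := by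
    intro a b hab
    have hab' : (a : ℕ) < (b : ℕ) := hab
    rw [hf]
    dsimp only
    rcases lt_trichotomy (a : ℕ) p with ha | ha | ha
    · rw [dif_pos ha]
      rcases lt_trichotomy (b : ℕ) p with hb | hb | hb
      · rw [dif_pos hb]
        exact (J.orderEmbOfFin hJm).strictMono (by exact hab')
      · rw [dif_neg (by omega), dif_pos hb]
        exact (hbd _).mpr ha
      · rw [dif_neg (by omega), dif_neg (by omega)]
        exact (J.orderEmbOfFin hJm).strictMono (show (⟨(a:ℕ), _⟩ : Fin m) < ⟨(b:ℕ)-1, _⟩ by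
          simp only [Fin.mk_lt_mk]; omega)
    · rw [dif_neg (by omega), dif_pos ha]
      have hbp : p < (b : ℕ) := by omega
      rw [dif_neg (by omega), dif_neg (by omega)]
      have h1 : ¬ J.orderEmbOfFin hJm ⟨(b:ℕ)-1, by omega⟩ < i := by
        rw [hbd]; simp only; omega
      have h2 : J.orderEmbOfFin hJm ⟨(b:ℕ)-1, by omega⟩ ≠ i := by
        intro he
        exact hiJ (he ▸ Finset.orderEmbOfFin_mem J hJm _)
      exact lt_of_le_of_ne (not_lt.mp h1) (Ne.symm h2)
    · rw [dif_neg (by omega), dif_neg (by omega), dif_neg (by omega), dif_neg (by omega)]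
      exact (J.orderEmbOfFin hJm).strictMono (show (⟨(a:ℕ)-1, _⟩ : Fin m) < ⟨(b:ℕ)-1, _⟩ by
        simp only [Fin.mk_lt_mk]; omega)
  have := Finset.orderEmbOfFin_unique hI hfs hmono
  exact (congrFun this k).symm

private theorem stmt7_snoc_lt {m : ℕ} {α : Sort*} (rows : Fin m → α) (u : α) (k : Fin (m+1))
    (h : (k : ℕ) < m) : (Fin.snoc rows u : Fin (m+1) → α) k = rows ⟨k, h⟩ := by
  simp [Fin.snoc, h]
  rfl

private theorem stmt7_det_perm {d m : ℕ} [DecidableEq (Fin d)] {J : Finset (Fin d)}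
    (hJm : J.card = m) {i : Fin d} (hiJ : i ∉ J) (hI : (insert i J).card = m + 1)
    (v : Fin d → Fin (m+1) → ℝ) :
    Matrix.det (Matrix.of fun k l : Fin (m+1) => v ((insert i J).orderEmbOfFin hI k) l)
      = (-1:ℝ)^(m - (J.filter (· < i)).card) *
        Matrix.det (Matrix.of (Fin.snoc (fun k => v (J.orderEmbOfFin hJm k)) (v i))) := by
  have hpm : (J.filter (· < i)).card ≤ m := by
    have := Finset.card_filter_le J (· < i); omega
  set p := (J.filter (· < i)).card with hp
  set pf : Fin (m+1) := ⟨p, by omega⟩ with hpf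
  set σ : Equiv.Perm (Fin (m+1)) :=
    (Fin.revPerm.trans (Fin.cycleRange pf.rev)).trans Fin.revPerm with hσ
  set M : Matrix (Fin (m+1)) (Fin (m+1)) ℝ :=
    Matrix.of (Fin.snoc (fun k => v (J.orderEmbOfFin hJm k)) (v i)) with hM
  have hσval : ∀ k : Fin (m+1), σ k = Fin.rev (Fin.cycleRange pf.rev (Fin.rev k)) := by
    intro k; rfl
  have hrows : (Matrix.of fun k l : Fin (m+1) => v ((insert i J).orderEmbOfFin hI k) l)
      = M.submatrix σ id := by
    ext k l
    simp only [Matrix.submatrix_apply, id_eq, Matrix.of_apply]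
    rw [stmt7_enum hJm hiJ hI k]
    rcases lt_trichotomy (k : ℕ) p with hk | hk | hk
    · rw [dif_pos hk]
      have h1 : pf.rev < Fin.rev k := by
        rw [Fin.lt_def]; simp only [Fin.val_rev, hpf, Fin.val_mk]; omega
      have h2 : σ k = k := by
        rw [hσval, Fin.cycleRange_of_gt h1, Fin.rev_rev]
      have h3 := stmt7_snoc_lt (fun k => v (J.orderEmbOfFin hJm k)) (v i) k (by omega)
      rw [hM]
      simp only [Matrix.of_apply]
      rw [h2, h3]
    · rw [dif_neg (by omega), dif_pos hk]
      have h2 : σ k = Fin.last m := by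
        have : Fin.rev k = pf.rev := by
          congr 1; exact Fin.ext hk
        rw [hσval, this, Fin.cycleRange_self, Fin.rev_zero]
      rw [h2, hM]
      simp [Fin.snoc_last]
    · rw [dif_neg (by omega), dif_neg (by omega)]
      have h1 : Fin.rev k < pf.rev := by
        rw [Fin.lt_def]; simp only [Fin.val_rev, hpf, Fin.val_mk]; omega
      have hvadd : ((Fin.rev k + 1 : Fin (m+1)) : ℕ) = (Fin.rev k : ℕ) + 1 :=
        Fin.val_add_one_of_lt (lt_of_lt_of_le h1 (Fin.le_last _))
      have h2 : σ k = ⟨(k:ℕ) - 1, by have := k.isLt; omega⟩ := by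
        rw [hσval, Fin.cycleRange_of_lt h1]
        apply Fin.ext
        simp only [Fin.val_rev, hvadd]
        have := k.isLt; omega
      have h3 := stmt7_snoc_lt (fun k => v (J.orderEmbOfFin hJm k)) (v i)
        ⟨(k:ℕ) - 1, by have := k.isLt; omega⟩ (by simp only; have := k.isLt; omega)
      rw [hM]
      simp only [Matrix.of_apply]
      rw [h2, h3]
  rw [hrows, Matrix.det_permute]
  congr 1
  have hsgn : Equiv.Perm.sign σ = (-1 : ℤˣ)^(m - p) := by
    rw [hσ]
    have h1 : (Fin.revPerm.trans (Fin.cycleRange pf.rev)).trans Fin.revPerm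
        = Fin.revPerm * Fin.cycleRange pf.rev * Fin.revPerm := rfl
    rw [h1, Equiv.Perm.sign_mul, Equiv.Perm.sign_mul]
    have h2 : ∀ u : ℤˣ, Equiv.Perm.sign (Fin.revPerm (n := m+1)) * u *
        Equiv.Perm.sign (Fin.revPerm (n := m+1)) = u := by
      intro u
      rw [mul_comm, ← mul_assoc]
      simp [← sq, Int.units_sq]
    rw [h2, Fin.sign_cycleRange]
    congr 1
    rw [Fin.val_rev]
    simp only [hpf]
    omega
  rw [hsgn]
  push_cast
  norm_num

/-- For a complete simplicial multi-fan `Δ`, the chain `∑_{I∈Σ^{(n)}} w(I)⟨I⟩` is a cycle: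
for every `(n−2)`-face `J` (i.e. `J.card = n−1`) the boundary coefficient vanishes.  Here
`⟨I⟩ = ε(I)⟨i_1 < … < i_n⟩`, and the boundary coefficient of `J` in `∂⟨I⟩` carries the sign
`(−1)^{#{j ∈ I : j < i}}` where `{i} = I ∖ J`. -/
theorem stmt7 (n d : ℕ) (hn : 0 < n) (Δ : MultiFan n d) (hC : Δ.Complete) :
    ∀ J : Finset (Fin d), J.card = n - 1 →
      ∑ I ∈ Δ.S.filter (fun I => I.card = n ∧ J ⊆ I),
        Δ.w I * Δ.epsSign I *
          (-1 : ℤ) ^ (I.filter fun j => ∃ i ∈ I, i ∉ J ∧ j < i).card = 0 := by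
  intro J hJcard
  classical
  obtain ⟨m, rfl⟩ : ∃ m, n = m + 1 := ⟨n - 1, by omega⟩
  by_cases hJS : J ∈ Δ.S
  swap
  · apply Finset.sum_eq_zero
    intro I hI
    rw [Finset.mem_filter] at hI
    exact absurd (Δ.downClosed I hI.1 J hI.2.2) hJS
  have hJm : J.card = m := by omega
  set rowsJ : Fin m → (Fin (m+1) → ℝ) := fun k => Δ.v (J.orderEmbOfFin hJm k) with hrowsJ
  set η : (Fin (m+1) → ℝ) → ℝ := fun u => Matrix.det (Matrix.of (Fin.snoc rowsJ u)) with hη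
  have hrange : Set.range rowsJ = Δ.v '' ↑J := by
    rw [hrowsJ, show (fun k => Δ.v (J.orderEmbOfFin hJm k)) = Δ.v ∘ (J.orderEmbOfFin hJm) from rfl,
      Set.range_comp, Finset.range_orderEmbOfFin]
  have hrJ_indep : LinearIndependent ℝ rowsJ := by
    have h1 := Δ.indep J hJS
    have h2 : rowsJ = (fun i : {x // x ∈ J} => Δ.v i.1) ∘
        (fun k => (⟨J.orderEmbOfFin hJm k, Finset.orderEmbOfFin_mem J hJm k⟩ : {x // x ∈ J})) :=
      rfl
    rw [h2]
    exact h1.comp _ (fun a b hab => (J.orderEmbOfFin hJm).injective (congrArg Subtype.val hab))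
  have hker : ∀ u, η u = 0 ↔ u ∈ Submodule.span ℝ (Δ.v '' ↑J) := by
    intro u
    rw [← not_iff_not, ← Ne, hη]
    simp only
    rw [stmt7_detkey, linearIndependent_fin_snoc, ← hrange]
    simp [hrJ_indep]
  have hηsub : ∀ (x : Fin (m+1) → ℝ) (t : ℝ) (y : Fin (m+1) → ℝ),
      η (x - t • y) = η x - t * η y := by
    intro x t y
    have h1 : x - t • y = x + (-t) • y := by rw [neg_smul, ← sub_eq_add_neg]
    rw [h1, hη]
    simp only
    rw [stmt7_eta_add, stmt7_eta_smul]
    ring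
  have hη0 : η 0 = 0 := (hker 0).mpr (Submodule.zero_mem _)
  have hηneg : ∀ x : Fin (m+1) → ℝ, η (-x) = - η x := by
    intro x
    have h1 : (-x) = (0 : Fin (m+1) → ℝ) - (1:ℝ) • x := by simp
    rw [h1, hηsub, hη0]
    ring
  obtain ⟨x, hxgen⟩ : ∃ x : Fin (m+1) → ℝ, Δ.GenericFor J x := by
    set F : Finset (Submodule ℝ (Fin (m+1) → ℝ)) :=
      (Δ.S.filter (fun L => L.card < m+1)).image (fun L : Finset (Fin d) => Submodule.span ℝ (Δ.v '' (L : Set (Fin d)))) with hF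
    have htop : ⊤ ∉ F := by
      intro htop
      rw [hF, Finset.mem_image] at htop
      obtain ⟨L, hL, hLtop⟩ := htop
      rw [Finset.mem_filter] at hL
      have h1 : Module.finrank ℝ (Submodule.span ℝ (Δ.v '' ↑L)) ≤ L.card := by
        have h2 : Δ.v '' ↑L = ↑(L.image Δ.v) := by simp [Finset.coe_image]
        rw [h2]
        exact le_trans (finrank_span_finset_le_card _) Finset.card_image_le
      rw [hLtop, finrank_top, Module.finrank_fin_fun] at h1
      omega
    have hne := Subspace.biUnion_ne_univ_of_top_notMem (s := F) htop
    rw [Ne, Set.eq_univ_iff_forall] at hne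
    push_neg at hne
    obtain ⟨x, hx⟩ := hne
    refine ⟨x, fun L hL hJL hLc hxmem => hx ?_⟩
    rw [Set.mem_iUnion₂]
    exact ⟨Submodule.span ℝ (Δ.v '' ↑L),
      Finset.mem_image.mpr ⟨L, Finset.mem_filter.mpr ⟨hL, hLc⟩, rfl⟩, hxmem⟩
  have hxη : η x ≠ 0 := fun h0 =>
    hxgen J hJS (subset_refl J) (by omega) ((hker x).mp h0)
  have hgenneg : ∀ y, Δ.GenericFor J y → Δ.GenericFor J (-y) := by
    intro y hy L hL hJL hLc hmem
    exact hy L hL hJL hLc (by simpa using Submodule.neg_mem _ hmem)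
  set x' : Fin (m+1) → ℝ := if 0 < η x then x else -x with hx'
  have hx'gen : Δ.GenericFor J x' := by
    rw [hx']; split_ifs
    exacts [hxgen, hgenneg x hxgen]
  have hx'pos : 0 < η x' := by
    rw [hx']
    split_ifs with h
    · exact h
    · rw [hηneg]
      have := lt_of_le_of_ne (not_lt.mp h) hxη
      linarith
  have hkey : ∀ I ∈ Δ.S.filter (fun I => I.card = m + 1 ∧ J ⊆ I),
      (Δ.w I * Δ.epsSign I * (-1:ℤ) ^ (I.filter fun j => ∃ i ∈ I, i ∉ J ∧ j < i).card
        = (-1:ℤ)^m * (Δ.w I * (if Δ.InProjCone J I x' then 1 else -1)))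
      ∧ (Δ.InProjCone J I (-x') ↔ ¬ Δ.InProjCone J I x') := by
    intro I hI
    rw [Finset.mem_filter] at hI
    obtain ⟨hIS, hIc, hJI⟩ := hI
    have hsd : (I \ J).card = 1 := by
      rw [Finset.card_sdiff_of_subset hJI]; omega
    obtain ⟨i, hi⟩ := Finset.card_eq_one.mp hsd
    have hiI : i ∈ I := (Finset.mem_sdiff.mp (hi ▸ Finset.mem_singleton_self i)).1
    have hiJ : i ∉ J := (Finset.mem_sdiff.mp (hi ▸ Finset.mem_singleton_self i)).2
    have hIeq : I = insert i J := by
      refine (Finset.eq_of_subset_of_card_le ?_ ?_).symm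
      · exact Finset.insert_subset hiI hJI
      · rw [Finset.card_insert_of_notMem hiJ]; omega
    subst hIeq
    have hfilter : ((insert i J).filter fun j => ∃ i' ∈ insert i J, i' ∉ J ∧ j < i')
        = J.filter (· < i) := by
      ext j
      simp only [Finset.mem_filter, Finset.mem_insert]
      constructor
      · rintro ⟨hj, i', hi', hi'J, hji'⟩
        have hii' : i' = i := by
          rcases hi' with rfl | h
          · rfl
          · exact absurd h hi'J
        subst hii'
        rcases hj with rfl | hjJ
        · exact absurd rfl (ne_of_lt hji')
        · exact ⟨hjJ, hji'⟩
      · rintro ⟨hjJ, hji⟩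
        exact ⟨Or.inr hjJ, i, Or.inl rfl, hiJ, hji⟩
    have hsnoc_vi : Fin.snoc rowsJ (Δ.v i)
        = Δ.v ∘ (Fin.snoc (fun k => J.orderEmbOfFin hJm k) i) :=
      (Fin.comp_snoc Δ.v (fun k => J.orderEmbOfFin hJm k) i).symm
    have hg_mem : ∀ k : Fin (m+1),
        (Fin.snoc (fun k => J.orderEmbOfFin hJm k) i : Fin (m+1) → Fin d) k ∈ insert i J := by
      intro k
      refine Fin.lastCases ?_ (fun k => ?_) k
      · rw [Fin.snoc_last]; exact Finset.mem_insert_self i J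
      · rw [Fin.snoc_castSucc]
        exact Finset.mem_insert_of_mem (Finset.orderEmbOfFin_mem J hJm k)
    have hg_inj : Function.Injective
        (Fin.snoc (fun k => J.orderEmbOfFin hJm k) i : Fin (m+1) → Fin d) := by
      intro a b
      refine Fin.lastCases ?_ (fun a' => ?_) a <;>
        refine Fin.lastCases ?_ (fun b' => ?_) b <;> intro hab
      · rfl
      · rw [Fin.snoc_last, Fin.snoc_castSucc] at hab
        exact absurd (hab.symm ▸ Finset.orderEmbOfFin_mem J hJm b') hiJ
      · rw [Fin.snoc_last, Fin.snoc_castSucc] at hab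
        exact absurd (hab ▸ Finset.orderEmbOfFin_mem J hJm a') hiJ
      · rw [Fin.snoc_castSucc, Fin.snoc_castSucc] at hab
        exact congrArg Fin.castSucc ((J.orderEmbOfFin hJm).injective hab)
    have hvi : η (Δ.v i) ≠ 0 := by
      rw [hη]
      simp only
      rw [stmt7_detkey, hsnoc_vi]
      exact (Δ.indep _ hIS).comp (fun k => ⟨_, hg_mem k⟩)
        (fun a b hab => hg_inj (congrArg Subtype.val hab))
    have heps : Δ.epsSign (insert i J)
        = (if 0 < (-1:ℝ)^(m - (J.filter (· < i)).card) * η (Δ.v i) then (1:ℤ) else -1) := by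
      rw [MultiFan.epsSign, dif_pos hIc]
      have hdet : (Matrix.of fun k l => Δ.v (((insert i J).orderEmbOfFin hIc) k) l).det
          = (-1:ℝ) ^ (m - (J.filter (· < i)).card) * η (Δ.v i) :=
        stmt7_det_perm hJm hiJ hIc Δ.v
      simp only [Finset.coe_orderIsoOfFin_apply, hdet]
    have hcone : ∀ y : Fin (m+1) → ℝ, η y ≠ 0 →
        (Δ.InProjCone J (insert i J) y ↔ (0 < η (Δ.v i) ↔ 0 < η y)) := by
      intro y hy
      rw [MultiFan.InProjCone]
      constructor
      · rintro ⟨a, ha0, hmem⟩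
        rw [hi] at ha0 hmem
        rw [Finset.sum_singleton] at hmem
        have h0 : η (y - a i • Δ.v i) = 0 := (hker _).mpr hmem
        rw [hηsub] at h0
        have hai : η y = a i * η (Δ.v i) := by linarith
        have h1 : 0 ≤ a i := ha0 i (Finset.mem_singleton_self i)
        have h2 : a i ≠ 0 := by
          intro h3
          rw [h3] at hai
          simp at hai
          exact hy hai
        have h4 : 0 < a i := lt_of_le_of_ne h1 (Ne.symm h2)
        constructor <;> intro h5
        · nlinarith
        · nlinarith
      · intro hiff
        refine ⟨fun _ => η y / η (Δ.v i), ?_, ?_⟩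
        · intro j hj
          have : 0 < η y / η (Δ.v i) ∨ η y / η (Δ.v i) = 0 := by
            rcases lt_or_gt_of_ne hvi with h | h
            · have hyneg : η y < 0 := by
                have := mt hiff.mpr (not_lt.mpr h.le)
                exact lt_of_le_of_ne (not_lt.mp this) hy
              left
              exact div_pos_of_neg_of_neg hyneg h
            · left
              exact div_pos (hiff.mp h) h
          rcases this with h | h
          · exact le_of_lt h
          · exact le_of_eq h.symm
        · rw [hi, Finset.sum_singleton]
          apply (hker _).mp
          rw [hηsub, div_mul_cancel₀ _ hvi, sub_self]
    have hiff1 : Δ.InProjCone J (insert i J) x' ↔ 0 < η (Δ.v i) := by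
      rw [hcone x' (ne_of_gt hx'pos)]
      constructor
      · exact fun h => h.mpr hx'pos
      · exact fun h => ⟨fun _ => hx'pos, fun _ => h⟩
    have hx'neg : η (-x') < 0 := by rw [hηneg]; linarith
    have hiff2 : Δ.InProjCone J (insert i J) (-x') ↔ ¬ 0 < η (Δ.v i) := by
      rw [hcone (-x') (ne_of_lt hx'neg)]
      constructor
      · intro h h2
        exact absurd (h.mp h2) (not_lt.mpr hx'neg.le)
      · intro h
        constructor
        · intro h2; exact absurd h2 h
        · intro h2; exact absurd h2 (not_lt.mpr hx'neg.le)
    constructor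
    · rw [heps, hfilter, stmt7_signIf (η (Δ.v i)) hvi (m - (J.filter (· < i)).card)]
      have hsI : (if Δ.InProjCone J (insert i J) x' then (1:ℤ) else -1)
          = (if 0 < η (Δ.v i) then 1 else -1) := by
        by_cases h : 0 < η (Δ.v i)
        · rw [if_pos h, if_pos (hiff1.mpr h)]
        · rw [if_neg h, if_neg (fun h2 => h (hiff1.mp h2))]
      rw [hsI]
      have hpm : (J.filter (· < i)).card ≤ m := le_trans (Finset.card_filter_le J _) hJm.le
      have hpow : (-1:ℤ)^(m - (J.filter (· < i)).card) * (-1:ℤ)^((J.filter (· < i)).card)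
          = (-1:ℤ)^m := by
        rw [← pow_add]
        congr 1
        omega
      rw [← hpow]
      ring
    · rw [hiff1, hiff2]
  rw [Finset.sum_congr rfl (fun I hI => (hkey I hI).1), ← Finset.mul_sum]
  have hfx : ∀ y : Fin (m+1) → ℝ,
      Δ.S.filter (fun I => I.card = m+1 ∧ J ⊆ I ∧ Δ.InProjCone J I y)
        = (Δ.S.filter (fun I => I.card = m+1 ∧ J ⊆ I)).filter (fun I => Δ.InProjCone J I y) := by
    intro y
    rw [Finset.filter_filter]
    apply Finset.filter_congr
    intros
    tauto
  have hsplit : ∑ I ∈ Δ.S.filter (fun I => I.card = m + 1 ∧ J ⊆ I),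
      Δ.w I * (if Δ.InProjCone J I x' then (1:ℤ) else -1)
      = Δ.dv J x' - Δ.dv J (-x') := by
    rw [MultiFan.dv, MultiFan.dv, hfx, hfx]
    rw [Finset.filter_congr (fun I hI => by rw [(hkey I hI).2] : ∀ I ∈ Δ.S.filter (fun I => I.card = m+1 ∧ J ⊆ I), Δ.InProjCone J I (-x') ↔ ¬ Δ.InProjCone J I x')]
    simp only [mul_ite, mul_one, mul_neg_one]
    rw [Finset.sum_ite, Finset.sum_neg_distrib, sub_eq_add_neg]
  rw [hsplit, (hC J hJS).2 x' (-x') hx'gen (hgenneg x' hx'gen), sub_self, mul_zero]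
end
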